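/- arXiv:2306.05574 — 3 statements merged into one kernel-verified Lean document; each statement's English description precedes it below -/
import Mathlib

section
/- In a 2-connected signed graph G, an edge e appears in cycles of both positive and negative sign if and only if G - e is unbalanced (contains a negative cycle). -/
/-!
If `C₁` and `C₂` are cycles through `e` of signs `1` and `-1`, their symmetric difference is an
even edge set of sign `-1` avoiding `e`. Peeling off cycles from an even edge set one at a time, a
negative one must appear.

Conversely let `C` be a negative cycle avoiding `e = uv`. From 2-connectivity (Whitney's theorem
and the fan lemma) we get disjoint paths from `u` and `v` to distinct vertices `x` and `y` of `C`
that meet `C` only at their ends. With `e` they form an `x`–`y` path that closes up with each of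
the two `x`–`y` arcs of `C`. Both resulting cycles contain `e`, and the product of their signs is
the sign of `C`, which is `-1`.
-/

/-- A finite loopless signed multigraph. -/
structure SGraph : Type 1 where
  V : Type
  E : Type
  [fintV : Fintype V]
  [decV : DecidableEq V]
  [fintE : Fintype E]
  [decE : DecidableEq E]
  ends : E → Sym2 V
  loopless : ∀ e, ¬ (ends e).IsDiag
  sgn : E → ℤˣ

attribute [instance] SGraph.fintV SGraph.decV SGraph.fintE SGraph.decE

namespace SGraph

variable (G : SGraph)

/-- Degree of a vertex in an edge set. -/
noncomputable def deg (S : Set G.E) (v : G.V) : ℕ := {e ∈ S | v ∈ G.ends e}.ncard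

/-- The sign of an edge set: the product of the signs of its edges. -/
noncomputable def signOf (S : Set G.E) : ℤˣ := ∏ᶠ e ∈ S, G.sgn e

/-- An edge set is connected: any two of its edges are linked by a chain of
edges of the set, consecutive ones sharing a vertex. -/
def conn (S : Set G.E) : Prop :=
  ∀ e ∈ S, ∀ f ∈ S,
    Relation.ReflTransGen (fun a b => a ∈ S ∧ b ∈ S ∧ ∃ v, v ∈ G.ends a ∧ v ∈ G.ends b) e f

/-- An edge set is (the edge set of) a cycle: nonempty, every vertex has degree 0 or 2,
and it is connected. -/
def IsCycle (S : Set G.E) : Prop :=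
  S.Nonempty ∧ (∀ v, G.deg S v = 0 ∨ G.deg S v = 2) ∧ G.conn S

/-- The vertices covered by an edge set. -/
def verts (S : Set G.E) : Set G.V := {v | ∃ e ∈ S, v ∈ G.ends e}

/-- Two edges are untied: there are cycles of both signs through both edges. -/
def Untied (e₁ e₂ : G.E) : Prop :=
  (∃ C, G.IsCycle C ∧ e₁ ∈ C ∧ e₂ ∈ C ∧ G.signOf C = 1) ∧
  (∃ C, G.IsCycle C ∧ e₁ ∈ C ∧ e₂ ∈ C ∧ G.signOf C = -1)

/-- Two edges are tied: all cycles through both have the same sign. -/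
def Tied (e₁ e₂ : G.E) : Prop :=
  ∀ C C', G.IsCycle C → G.IsCycle C' → e₁ ∈ C → e₂ ∈ C → e₁ ∈ C' → e₂ ∈ C' →
    G.signOf C = G.signOf C'

/-- A signed graph is balanced if every cycle is positive. -/
def Balanced : Prop := ∀ C, G.IsCycle C → G.signOf C = 1

/-- Reachability between vertices avoiding a forbidden vertex set `S`. -/
def ReachOutside (S : Set G.V) : G.V → G.V → Prop :=
  Relation.ReflTransGen (fun a b => a ∉ S ∧ b ∉ S ∧ ∃ e, G.ends e = s(a, b))

/-- The graph minus the vertex set `S` is connected. -/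
def ConnOutside (S : Set G.V) : Prop :=
  ∀ u v : G.V, u ∉ S → v ∉ S → G.ReachOutside S u v

/-- `k`-connectivity: more than `k` vertices, and removing fewer than `k` vertices
leaves a connected graph. -/
def KConnected (k : ℕ) : Prop :=
  k + 1 ≤ Fintype.card G.V ∧ ∀ S : Set G.V, S.ncard < k → G.ConnOutside S

/-- `P` is the edge set of a path from `a` to `b` (possibly trivial when `a = b`). -/
def IsPath (P : Set G.E) (a b : G.V) : Prop :=
  (a = b ∧ P = ∅) ∨
  (a ≠ b ∧ P.Nonempty ∧ G.deg P a = 1 ∧ G.deg P b = 1 ∧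
    (∀ v, v ≠ a → v ≠ b → G.deg P v = 0 ∨ G.deg P v = 2) ∧ G.conn P)

/-- The vertices of a path from `a` to `b`, including its ends. -/
def pverts (P : Set G.E) (a b : G.V) : Set G.V := G.verts P ∪ {a, b}

/-- An edge set is an edge-cut `δ(X)`. -/
def EdgeCut (S : Set G.E) : Prop :=
  ∃ X : Set G.V, ∀ e, e ∈ S ↔ ∃ a b, G.ends e = s(a, b) ∧ a ∈ X ∧ b ∉ X

/-- A signed graph is simple if no two distinct edges are parallel. -/
def Simple : Prop := ∀ e f : G.E, G.ends e = G.ends f → e = f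

end SGraph

open scoped symmDiff

lemma Set.ncard_symmDiff_add_two_mul_ncard_inter {α : Type*} [Finite α] (s t : Set α) :
    (s ∆ t).ncard + 2 * (s ∩ t).ncard = s.ncard + t.ncard := by
  rw [Set.symmDiff_def, Set.ncard_union_eq disjoint_sdiff_sdiff,
    ← Set.ncard_inter_add_ncard_sdiff_eq_ncard s t, ← Set.ncard_inter_add_ncard_sdiff_eq_ncard t s,
    Set.inter_comm t s]
  ring

namespace SGraph

variable {G : SGraph}

lemma ne_of_ends {e : G.E} {a b : G.V} (he : G.ends e = s(a, b)) : a ≠ b := by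
  rintro rfl
  exact G.loopless e (he ▸ Sym2.mk_isDiag_iff.mpr rfl)

lemma exists_ends_eq (e : G.E) : ∃ a b, G.ends e = s(a, b) ∧ a ≠ b := by
  induction h : G.ends e using Sym2.ind with
  | _ a b => exact ⟨a, b, rfl, ne_of_ends h⟩

inductive Walk (G : SGraph) : G.V → G.V → Type
  | nil (u : G.V) : Walk G u u
  | cons {u v w : G.V} (e : G.E) (he : G.ends e = s(u, v)) (p : Walk G v w) : Walk G u w

namespace Walk

def support {u v : G.V} : Walk G u v → List G.V
  | nil u => [u]
  | cons (u := u) _ _ p => u :: p.support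

def edges {u v : G.V} : Walk G u v → List G.E
  | nil _ => []
  | cons e _ p => e :: p.edges

def append {u v w : G.V} : Walk G u v → Walk G v w → Walk G u w
  | nil _, q => q
  | cons e he p, q => cons e he (p.append q)

def reverse {u v : G.V} : Walk G u v → Walk G v u
  | nil u => nil u
  | cons e he p => p.reverse.append (cons e (he.trans Sym2.eq_swap) (nil _))

variable {u v w x y z : G.V}

def edgeSet (p : Walk G u v) : Set G.E := {e | e ∈ p.edges}

def sign (p : Walk G u v) : ℤˣ := (p.edges.map G.sgn).prod

@[simp] lemma support_nil : (nil u : Walk G u u).support = [u] := rfl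
@[simp] lemma support_cons (e : G.E) (he : G.ends e = s(u, v)) (p : Walk G v w) :
    (cons e he p).support = u :: p.support := rfl
@[simp] lemma edges_nil : (nil u : Walk G u u).edges = [] := rfl
@[simp] lemma edges_cons (e : G.E) (he : G.ends e = s(u, v)) (p : Walk G v w) :
    (cons e he p).edges = e :: p.edges := rfl
@[simp] lemma nil_append (q : Walk G u v) : (nil u).append q = q := rfl
@[simp] lemma cons_append (e : G.E) (he : G.ends e = s(u, v)) (p : Walk G v w)
    (q : Walk G w x) : (cons e he p).append q = cons e he (p.append q) := rfl
@[simp] lemma mem_edgeSet {p : Walk G u v} {e : G.E} : e ∈ p.edgeSet ↔ e ∈ p.edges := Iff.rfl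

lemma support_eq_cons (p : Walk G u v) : p.support = u :: p.support.tail := by
  cases p <;> rfl

@[simp] lemma start_mem_support (p : Walk G u v) : u ∈ p.support := by
  rw [support_eq_cons]; exact List.mem_cons_self

@[simp] lemma end_mem_support (p : Walk G u v) : v ∈ p.support := by
  induction p with
  | nil => simp
  | cons e he p ih => simp [ih]

lemma end_mem_support_tail (p : Walk G u v) (h : u ≠ v) : v ∈ p.support.tail := by
  cases p with
  | nil => exact absurd rfl h
  | cons e he p => simp

@[simp] lemma edges_append (p : Walk G u v) (q : Walk G v w) :
    (p.append q).edges = p.edges ++ q.edges := by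
  induction p with
  | nil => rfl
  | cons e he p ih => simp [ih]

@[simp] lemma support_append (p : Walk G u v) (q : Walk G v w) :
    (p.append q).support = p.support ++ q.support.tail := by
  induction p with
  | nil => exact q.support_eq_cons
  | cons e he p ih => simp [ih]

lemma support_tail_append (p : Walk G u v) (q : Walk G v w) :
    (p.append q).support.tail = p.support.tail ++ q.support.tail := by
  rw [support_append, p.support_eq_cons]; rfl

lemma mem_support_append_iff {p : Walk G u v} {q : Walk G v w} :
    x ∈ (p.append q).support ↔ x ∈ p.support ∨ x ∈ q.support := by
  rw [support_append, List.mem_append, q.support_eq_cons, List.mem_cons]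
  constructor
  · rintro (h | h)
    · exact .inl h
    · exact .inr (.inr h)
  · rintro (h | rfl | h)
    · exact .inl h
    · exact .inl p.end_mem_support
    · exact .inr h

lemma mem_support_append_left {p : Walk G u v} (q : Walk G v w) (hx : x ∈ p.support) :
    x ∈ (p.append q).support :=
  mem_support_append_iff.mpr (.inl hx)

lemma mem_support_append_right (p : Walk G u v) {q : Walk G v w} (hx : x ∈ q.support) :
    x ∈ (p.append q).support :=
  mem_support_append_iff.mpr (.inr hx)

@[simp] lemma edges_reverse (p : Walk G u v) : p.reverse.edges = p.edges.reverse := by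
  induction p with
  | nil => rfl
  | cons e he p ih => simp [reverse, ih]

@[simp] lemma support_reverse (p : Walk G u v) : p.reverse.support = p.support.reverse := by
  induction p with
  | nil => rfl
  | cons e he p ih => simp [reverse, ih]

lemma sign_append (p : Walk G u v) (q : Walk G v w) : (p.append q).sign = p.sign * q.sign := by
  simp [sign]

lemma sign_reverse (p : Walk G u v) : p.reverse.sign = p.sign := by
  simp [sign, List.prod_reverse]

lemma sign_eq_of_perm {p : Walk G u v} {q : Walk G w x} (h : p.edges.Perm q.edges) :
    p.sign = q.sign :=
  (h.map G.sgn).prod_eq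

lemma mem_support_of_mem_edges (p : Walk G u v) {f : G.E} (hf : f ∈ p.edges)
    (hx : x ∈ G.ends f) : x ∈ p.support := by
  induction p with
  | nil => simp at hf
  | cons e he p ih =>
    rcases List.mem_cons.mp hf with rfl | hf
    · rw [he, Sym2.mem_iff] at hx
      rcases hx with rfl | rfl <;> simp
    · simp [ih hf]

lemma edges_nodup_of_support_nodup {p : Walk G u v} (h : p.support.Nodup) : p.edges.Nodup := by
  induction p with
  | nil => simp
  | cons e he p ih =>
    simp only [support_cons, List.nodup_cons] at h
    exact List.nodup_cons.mpr
      ⟨fun hmem => h.1 (p.mem_support_of_mem_edges hmem (by simp [he])), ih h.2⟩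

lemma mem_support_reverse {p : Walk G u v} : x ∈ p.reverse.support ↔ x ∈ p.support := by
  simp

lemma support_nodup_reverse {p : Walk G u v} : p.reverse.support.Nodup ↔ p.support.Nodup := by
  simp

lemma support_nodup_append_iff {p : Walk G u v} {q : Walk G v w} :
    (p.append q).support.Nodup ↔
      p.support.Nodup ∧ q.support.Nodup ∧ ∀ x ∈ p.support, x ∈ q.support → x = v := by
  have hv := p.end_mem_support
  rw [support_append, List.nodup_append, q.support_eq_cons, List.nodup_cons]
  constructor
  · rintro ⟨hp, hq, hdisj⟩
    refine ⟨hp, ⟨fun hv' => hdisj _ hv _ hv' rfl, hq⟩, fun x hx hxq => ?_⟩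
    rcases List.mem_cons.mp hxq with rfl | hxq
    · rfl
    · exact absurd rfl (hdisj _ hx _ hxq)
  · rintro ⟨hp, ⟨hvq, hq⟩, hdisj⟩
    refine ⟨hp, hq, fun x hx y hy hxy => ?_⟩
    subst hxy
    obtain rfl := hdisj x hx (List.mem_cons_of_mem _ hy)
    exact hvq hy

lemma exists_eq_append_first_mem (p : Walk G u v) {M : Set G.V} (hx : x ∈ p.support)
    (hxM : x ∈ M) : ∃ y ∈ M, ∃ (q : Walk G u y) (r : Walk G y v),
      p = q.append r ∧ ∀ w ∈ q.support, w ∈ M → w = y := by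
  induction p with
  | nil u =>
    obtain rfl : x = u := by simpa using hx
    exact ⟨x, hxM, nil x, nil x, rfl, by simp⟩
  | @cons a b c e he p ih =>
    by_cases ha : a ∈ M
    · exact ⟨a, ha, nil a, cons e he p, rfl, by simp⟩
    · have hx' : x ∈ p.support := by
        rcases List.mem_cons.mp hx with rfl | hx
        · exact absurd hxM ha
        · exact hx
      obtain ⟨y, hyM, q, r, rfl, hq⟩ := ih hx'
      refine ⟨y, hyM, cons e he q, r, rfl, fun w hw hwM => ?_⟩
      rcases List.mem_cons.mp hw with rfl | hw
      · exact absurd hwM ha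
      · exact hq w hw hwM

lemma exists_eq_append (p : Walk G u v) (hx : x ∈ p.support) :
    ∃ (q : Walk G u x) (r : Walk G x v), p = q.append r := by
  obtain ⟨y, rfl, q, r, rfl, -⟩ := p.exists_eq_append_first_mem hx (Set.mem_singleton x)
  exact ⟨q, r, rfl⟩

lemma exists_path_subset (p : Walk G u v) :
    ∃ q : Walk G u v, q.support.Nodup ∧ q.support ⊆ p.support ∧ q.edges ⊆ p.edges := by
  induction p with
  | nil u => exact ⟨nil u, by simp, List.Subset.refl _, List.Subset.refl _⟩
  | @cons a b c e he p ih =>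
    obtain ⟨q, hq, hqs, hqe⟩ := ih
    by_cases ha : a ∈ q.support
    · obtain ⟨q₁, q₂, rfl⟩ := q.exists_eq_append ha
      refine ⟨q₂, (support_nodup_append_iff.mp hq).2.1, fun w hw => ?_, fun f hf => ?_⟩
      · exact List.mem_cons_of_mem _ (hqs (mem_support_append_right _ hw))
      · exact List.mem_cons_of_mem _ (hqe (by simp [hf]))
    · exact ⟨cons e he q, List.nodup_cons.mpr ⟨ha, hq⟩, List.cons_subset_cons _ hqs,
        List.cons_subset_cons _ hqe⟩

lemma edges_disjoint_of_common_eq (p : Walk G u v) (q : Walk G w x)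
    (h : ∀ y ∈ p.support, y ∈ q.support → y = z) : p.edges.Disjoint q.edges := by
  intro f hp hq
  obtain ⟨a, b, hab, hne⟩ := exists_ends_eq f
  have ha := h a (p.mem_support_of_mem_edges hp (by simp [hab]))
    (q.mem_support_of_mem_edges hq (by simp [hab]))
  have hb := h b (p.mem_support_of_mem_edges hp (by simp [hab]))
    (q.mem_support_of_mem_edges hq (by simp [hab]))
  exact hne (ha.trans hb.symm)

lemma eq_of_mem_support_append {p : Walk G u v} {q : Walk G v w}
    (h : (p.append q).support.Nodup) (hp : x ∈ p.support) (hq : x ∈ q.support) : x = v :=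
  (support_nodup_append_iff.mp h).2.2 x hp hq

/-- `edges_nodup` is not redundant: going from `u` to `v` and back along one edge gives support
tail `[v, u]`. -/
structure IsCircuit (p : Walk G u u) : Prop where
  edges_ne_nil : p.edges ≠ []
  edges_nodup : p.edges.Nodup
  support_tail_nodup : p.support.tail.Nodup

lemma isCircuit_append {p : Walk G u v} {q : Walk G v u} (huv : u ≠ v)
    (hp : p.support.Nodup) (hq : q.support.Nodup)
    (hpq : ∀ w ∈ p.support, w ∈ q.support → w = u ∨ w = v) (hE : p.edges.Disjoint q.edges) :
    (p.append q).IsCircuit := by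
  refine ⟨?_, ?_, ?_⟩
  · intro h
    obtain ⟨hp0, -⟩ := List.append_eq_nil_iff.mp ((edges_append p q).symm.trans h)
    cases p with
    | nil => exact huv rfl
    | cons => simp at hp0
  · rw [edges_append, List.nodup_append]
    exact ⟨edges_nodup_of_support_nodup hp, edges_nodup_of_support_nodup hq,
      fun f hfp g hfq hfg => hE hfp (hfg ▸ hfq)⟩
  · rw [support_tail_append, List.nodup_append]
    rw [p.support_eq_cons, List.nodup_cons] at hp
    rw [q.support_eq_cons, List.nodup_cons] at hq
    refine ⟨hp.2, hq.2, fun a ha b hb hab => ?_⟩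
    subst hab
    rcases hpq a (List.mem_of_mem_tail ha) (List.mem_of_mem_tail hb) with rfl | rfl
    · exact hp.1 ha
    · exact hq.1 hb

lemma isCircuit_append_edge {p : Walk G u v} (hp : p.support.Nodup) {g : G.E}
    (hg : G.ends g = s(v, u)) (hgp : g ∉ p.edges) : (p.append (cons g hg (nil u))).IsCircuit :=
  isCircuit_append (ne_of_ends hg).symm hp (by simpa using ne_of_ends hg)
    (fun w _ hw => by simp at hw; tauto) (by simpa using hgp)

lemma IsCircuit.split {p : Walk G u v} {q : Walk G v u} (h : (p.append q).IsCircuit)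
    (huv : u ≠ v) : p.support.Nodup ∧ q.support.Nodup ∧
      ∀ w ∈ p.support, w ∈ q.support → w = u ∨ w = v := by
  have hnd := h.support_tail_nodup
  rw [support_tail_append, List.nodup_append] at hnd
  obtain ⟨hp, hq, hdisj⟩ := hnd
  have hup : u ∉ p.support.tail := fun hu => hdisj _ hu _ (q.end_mem_support_tail huv.symm) rfl
  have hvq : v ∉ q.support.tail := fun hv => hdisj _ (p.end_mem_support_tail huv) _ hv rfl
  refine ⟨?_, ?_, fun w hwp hwq => ?_⟩
  · rw [p.support_eq_cons]; exact List.nodup_cons.mpr ⟨hup, hp⟩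
  · rw [q.support_eq_cons]; exact List.nodup_cons.mpr ⟨hvq, hq⟩
  · rw [p.support_eq_cons] at hwp
    rw [q.support_eq_cons] at hwq
    rcases List.mem_cons.mp hwp with rfl | hwp
    · exact .inl rfl
    rcases List.mem_cons.mp hwq with rfl | hwq
    · exact .inr rfl
    · exact absurd rfl (hdisj _ hwp _ hwq)

lemma IsCircuit.rotate {p : Walk G u v} {q : Walk G v u} (h : (p.append q).IsCircuit) :
    (q.append p).IsCircuit := by
  have hperm : (q.append p).edges.Perm (p.append q).edges := by
    simpa using List.perm_append_comm
  refine ⟨fun h0 => h.edges_ne_nil (by rw [h0] at hperm; exact hperm.symm.eq_nil),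
    hperm.nodup_iff.mpr h.edges_nodup, ?_⟩
  have hnd := h.support_tail_nodup
  rw [support_tail_append] at hnd ⊢
  exact List.perm_append_comm.nodup_iff.mp hnd

lemma IsCircuit.exists_arcs {p : Walk G u u} (hc : p.IsCircuit) (hx : x ∈ p.support)
    (hy : y ∈ p.support) (hxy : x ≠ y) :
    ∃ a b : Walk G x y, a.support.Nodup ∧ b.support.Nodup ∧
      (∀ w ∈ a.support, w ∈ b.support → w = x ∨ w = y) ∧
      (a.append b.reverse).edges.Perm p.edges ∧
      ∀ w, w ∈ p.support ↔ w ∈ a.support ∨ w ∈ b.support := by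
  obtain ⟨q, r, rfl⟩ := p.exists_eq_append hx
  have hc' := hc.rotate
  have hy' : y ∈ (r.append q).support := by
    rw [mem_support_append_iff, or_comm, ← mem_support_append_iff]; exact hy
  obtain ⟨a, b, hab⟩ := (r.append q).exists_eq_append hy'
  rw [hab] at hc'
  obtain ⟨ha, hb, hint⟩ := hc'.split hxy
  refine ⟨a, b.reverse, ha, support_nodup_reverse.mpr hb,
    fun w hwa hwb => hint w hwa (mem_support_reverse.mp hwb), ?_, fun w => ?_⟩
  · calc (a.append b.reverse.reverse).edges = (r.append q).edges := by simp [hab]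
      List.Perm _ (q.append r).edges := by simpa using List.perm_append_comm
  · rw [mem_support_reverse, ← mem_support_append_iff, ← hab, mem_support_append_iff,
      mem_support_append_iff, or_comm]

/-- `R` closes up with each of the two arcs of `c` between `x` and `y`; the arcs together make up
`c` and `R` is used twice, so the two signs multiply to the sign of `c`. -/
lemma IsCircuit.exists_isCircuit_sign_mul {a : G.V} {c : Walk G a a} (hc : c.IsCircuit)
    (R : Walk G x y) (hxy : x ≠ y) (hx : x ∈ c.support) (hy : y ∈ c.support)
    (hR : R.support.Nodup) (hRc : ∀ w ∈ R.support, w ∈ c.support → w = x ∨ w = y)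
    (hRE : R.edges.Disjoint c.edges) :
    ∃ d₁ d₂ : Walk G x x, d₁.IsCircuit ∧ d₂.IsCircuit ∧ R.edges ⊆ d₁.edges ∧
      R.edges ⊆ d₂.edges ∧ d₁.sign * d₂.sign = c.sign := by
  obtain ⟨a₁, a₂, ha₁, ha₂, -, hperm, hmem⟩ := hc.exists_arcs hx hy hxy
  have close (A : Walk G x y) (hA : A.support.Nodup) (hAc : ∀ w ∈ A.support, w ∈ c.support)
      (hAE : A.edges ⊆ c.edges) : (R.append A.reverse).IsCircuit :=
    isCircuit_append hxy hR (support_nodup_reverse.mpr hA)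
      (fun w hw hwA => hRc w hw (hAc w (mem_support_reverse.mp hwA)))
      (fun f hfR hfA => hRE hfR (hAE (by simpa using hfA)))
  have hE₁ : a₁.edges ⊆ c.edges := fun f hf => hperm.subset (by simp [hf])
  have hE₂ : a₂.edges ⊆ c.edges := fun f hf => hperm.subset (by simp [hf])
  refine ⟨R.append a₁.reverse, R.append a₂.reverse,
    close a₁ ha₁ (fun w hw => (hmem w).mpr (.inl hw)) hE₁,
    close a₂ ha₂ (fun w hw => (hmem w).mpr (.inr hw)) hE₂, by simp, by simp, ?_⟩
  rw [← sign_eq_of_perm hperm]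
  simp only [sign_append, sign_reverse]
  rw [mul_mul_mul_comm, Int.units_mul_self, one_mul]

lemma deg_edgeSet {p : Walk G u v} (h : p.edges.Nodup) (x : G.V) :
    G.deg p.edgeSet x = p.edges.countP (fun e => x ∈ G.ends e) := by
  have hset : {e ∈ p.edgeSet | x ∈ G.ends e} =
      ↑(p.edges.filter (fun e => x ∈ G.ends e)).toFinset := by
    ext f; simp [edgeSet]
  rw [deg, hset, Set.ncard_coe_finset, List.toFinset_card_of_nodup (h.filter _),
    List.countP_eq_length_filter]

lemma signOf_edgeSet {p : Walk G u v} (h : p.edges.Nodup) : G.signOf p.edgeSet = p.sign := by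
  rw [signOf, show p.edgeSet = ↑p.edges.toFinset by ext; simp, finprod_mem_coe_finset,
    List.prod_toFinset _ h, sign]

/-- Every inner vertex of a path meets two of its edges and each end one (a trivial path
counts its single vertex twice). -/
lemma countP_mem_ends_add_of_nodup {p : Walk G u v} (hp : p.support.Nodup) (x : G.V) :
    p.edges.countP (fun e => x ∈ G.ends e) + (if x = u then 1 else 0) + (if x = v then 1 else 0)
      = if x ∈ p.support then 2 else 0 := by
  induction p with
  | nil u => by_cases hx : x = u <;> simp [hx]
  | @cons a b c e he p ih =>
    rw [support_cons, List.nodup_cons] at hp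
    have hb := p.start_mem_support
    have hc := p.end_mem_support
    have hab := ne_of_ends he
    have ih := ih hp.2
    simp only [edges_cons, List.countP_cons, support_cons, List.mem_cons, he, Sym2.mem_iff,
      decide_eq_true_eq]
    by_cases hxa : x = a
    · subst hxa
      have h0 : p.edges.countP (fun e => x ∈ G.ends e) = 0 := by
        rw [List.countP_eq_zero]
        exact fun f hf hxf => hp.1 (p.mem_support_of_mem_edges hf (by simpa using hxf))
      simp [h0, hab, (show x ≠ c by rintro rfl; exact hp.1 hc)]
    · by_cases hxb : x = b
      · subst hxb; simp_all
      · simp_all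

lemma IsCircuit.deg_edgeSet {p : Walk G u u} (hc : p.IsCircuit) (x : G.V) :
    G.deg p.edgeSet x = if x ∈ p.support then 2 else 0 := by
  rw [Walk.deg_edgeSet hc.edges_nodup]
  cases p with
  | nil => exact absurd rfl hc.edges_ne_nil
  | @cons _ b _ e he q =>
    have hq := countP_mem_ends_add_of_nodup hc.support_tail_nodup x
    have hu := q.end_mem_support
    have hub := ne_of_ends he
    simp only [edges_cons, List.countP_cons, support_cons, List.mem_cons, he, Sym2.mem_iff,
      decide_eq_true_eq]
    by_cases hxu : x = u
    · subst hxu; simp_all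
    · by_cases hxb : x = b
      · subst hxb; simp_all
      · simp_all

lemma conn_edgeSet (p : Walk G u v) : G.conn p.edgeSet := by
  set r := fun a b => a ∈ p.edgeSet ∧ b ∈ p.edgeSet ∧ ∃ v, v ∈ G.ends a ∧ v ∈ G.ends b
  have chain : ∀ {a b : G.V} (q : Walk G a b), q.edges ⊆ p.edges →
      ∀ g ∈ p.edgeSet, a ∈ G.ends g → ∀ f ∈ q.edges, Relation.ReflTransGen r g f := by
    intro a b q
    induction q with
    | nil => simp
    | @cons a b c e he q ih =>
      intro hq g hg ha f hf
      have he' : e ∈ p.edgeSet := hq List.mem_cons_self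
      have hge : Relation.ReflTransGen r g e := .single ⟨hg, he', a, ha, by simp [he]⟩
      rcases List.mem_cons.mp hf with rfl | hf
      · exact hge
      · exact hge.trans (ih (fun f hf => hq (List.mem_cons_of_mem _ hf)) e he' (by simp [he]) f hf)
  have hsymm {a b : G.E} (h : Relation.ReflTransGen r a b) : Relation.ReflTransGen r b a :=
    Relation.ReflTransGen.mono (fun _ _ ⟨ha, hb, v, hva, hvb⟩ => ⟨hb, ha, v, hvb, hva⟩) _ _
      (Relation.reflTransGen_swap.mpr h)
  intro f hf g hg
  cases p with
  | nil => simp [edgeSet] at hf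
  | cons e he q =>
    have := chain (cons e he q) (List.Subset.refl _) e (by simp) (by simp [he])
    exact (hsymm (this f hf)).trans (this g hg)

lemma IsCircuit.isCycle {p : Walk G u u} (hc : p.IsCircuit) : G.IsCycle p.edgeSet := by
  refine ⟨?_, fun x => ?_, p.conn_edgeSet⟩
  · obtain ⟨f, hf⟩ := List.exists_mem_of_ne_nil _ hc.edges_ne_nil
    exact ⟨f, hf⟩
  · rw [hc.deg_edgeSet]
    split_ifs <;> simp

end Walk

variable (G : SGraph)

def EvenDegree (S : Set G.E) : Prop := ∀ x, Even (G.deg S x)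

open Walk

variable {G} {A B C S : Set G.E} {k : ℕ} {T : Set G.V} {a u v w t z x' t₁ t₂ : G.V}

lemma deg_eq_ncard_inter (S : Set G.E) (x : G.V) :
    G.deg S x = (S ∩ {e | x ∈ G.ends e}).ncard := rfl

lemma deg_mono (h : A ⊆ B) (x : G.V) : G.deg A x ≤ G.deg B x :=
  Set.ncard_le_ncard (Set.inter_subset_inter_left _ h)

lemma deg_sdiff (h : A ⊆ B) (x : G.V) : G.deg (B \ A) x = G.deg B x - G.deg A x := by
  rw [deg_eq_ncard_inter, deg_eq_ncard_inter, deg_eq_ncard_inter, Set.inter_sdiff_distrib_right]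
  exact Set.ncard_sdiff (Set.inter_subset_inter_left _ h)

lemma deg_symmDiff (x : G.V) :
    G.deg (A ∆ B) x + 2 * G.deg (A ∩ B) x = G.deg A x + G.deg B x := by
  simp only [deg_eq_ncard_inter]
  rw [Set.inter_symmDiff_distrib_right, Set.inter_inter_distrib_right]
  exact Set.ncard_symmDiff_add_two_mul_ncard_inter _ _

lemma signOf_sdiff_mul (h : A ⊆ B) : G.signOf (B \ A) * G.signOf A = G.signOf B := by
  rw [mul_comm]; exact finprod_mem_mul_sdiff h (Set.toFinite B)

lemma signOf_symmDiff : G.signOf (A ∆ B) = G.signOf A * G.signOf B := by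
  rw [signOf, signOf, signOf, ← finprod_mem_inter_mul_sdiff B (Set.toFinite A),
    ← finprod_mem_inter_mul_sdiff A (Set.toFinite B), Set.inter_comm B A, mul_mul_mul_comm,
    Int.units_mul_self, one_mul, Set.symmDiff_def,
    finprod_mem_union disjoint_sdiff_sdiff (Set.toFinite _) (Set.toFinite _)]

lemma IsCycle.evenDegree (hC : G.IsCycle A) : G.EvenDegree A := fun x => by
  rcases hC.2.1 x with h | h <;> simp [h]

lemma EvenDegree.sdiff (hB : G.EvenDegree B) (hA : G.EvenDegree A) (h : A ⊆ B) :
    G.EvenDegree (B \ A) := fun x => by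
  rw [deg_sdiff h]
  exact Nat.even_sub (deg_mono h x) |>.mpr (iff_of_true (hB x) (hA x))

lemma EvenDegree.exists_ne_mem_ends (hS : G.EvenDegree S) {g : G.E} (hg : g ∈ S)
    (hu : u ∈ G.ends g) : ∃ g' ∈ S, g' ≠ g ∧ u ∈ G.ends g' := by
  have hpos : 0 < G.deg S u := by
    rw [deg]; exact (Set.ncard_pos (Set.toFinite _)).mpr ⟨g, hg, hu⟩
  obtain ⟨g', ⟨hg'S, hug'⟩, hne⟩ :=
    Set.exists_ne_of_one_lt_ncard (s := {e ∈ S | u ∈ G.ends e})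
      (by obtain ⟨k, hk⟩ := hS u; rw [deg] at hk hpos; omega) g
  exact ⟨g', hg'S, hne, hug'⟩

/-- By evenness a second edge of `S` leaves the start of `p`; it either closes a circuit with an
initial segment of `p` or extends `p`. -/
lemma EvenDegree.exists_isCircuit_or_extend (hS : G.EvenDegree S) (p : Walk G u v)
    (hp : p.support.Nodup) (hne : p.edges ≠ []) (hpS : p.edgeSet ⊆ S) :
    (∃ (w : G.V) (c : Walk G w w), c.IsCircuit ∧ c.edgeSet ⊆ S) ∨
    ∃ (w : G.V) (q : Walk G w v), q.support.Nodup ∧ q.edges ≠ [] ∧ q.edgeSet ⊆ S ∧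
      p.support.length < q.support.length := by
  cases p with
  | nil => exact absurd rfl hne
  | @cons _ b _ g hg p =>
    obtain ⟨g', hg'S, hg'g, hug'⟩ :=
      hS.exists_ne_mem_ends (hpS (by simp)) (by simp [hg] : u ∈ G.ends g)
    obtain ⟨w, hw⟩ := Sym2.mem_iff_exists.mp hug'
    by_cases hwp : w ∈ (cons g hg p).support
    · obtain ⟨q, r, hqr⟩ := (cons g hg p).exists_eq_append hwp
      have hq : q.support.Nodup := (support_nodup_append_iff.mp (hqr ▸ hp)).1
      have hqe : q.edges ⊆ (cons g hg p).edges := by rw [hqr, edges_append]; simp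
      have hg'q : g' ∉ q.edges := fun h => by
        rcases List.mem_cons.mp (hqe h) with rfl | h
        · exact hg'g rfl
        · exact (List.nodup_cons.mp hp).1 (p.mem_support_of_mem_edges h hug')
      refine .inl ⟨u, _, isCircuit_append_edge hq (hw.trans Sym2.eq_swap) hg'q, fun f hf => ?_⟩
      simp only [mem_edgeSet, edges_append, edges_cons, edges_nil, List.mem_append,
        List.mem_singleton] at hf
      rcases hf with hf | rfl
      · exact hpS (hqe hf)
      · exact hg'S
    · refine .inr ⟨w, cons g' (hw.trans Sym2.eq_swap) (cons g hg p), List.nodup_cons.mpr ⟨hwp, hp⟩,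
        by simp, fun f hf => ?_, by simp⟩
      rcases List.mem_cons.mp hf with rfl | hf
      · exact hg'S
      · exact hpS hf

lemma EvenDegree.exists_isCircuit (hS : G.EvenDegree S) (hne : S.Nonempty) :
    ∃ (w : G.V) (c : Walk G w w), c.IsCircuit ∧ c.edgeSet ⊆ S := by
  obtain ⟨g, hg⟩ := hne
  obtain ⟨a, b, hab, hne⟩ := exists_ends_eq g
  suffices key : ∀ n u (p : Walk G u b), Fintype.card G.V < p.support.length + n →
      p.support.Nodup → p.edges ≠ [] → p.edgeSet ⊆ S →
      ∃ (w : G.V) (c : Walk G w w), c.IsCircuit ∧ c.edgeSet ⊆ S from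
    key (Fintype.card G.V + 1) a (cons g hab (nil b)) (by simp; omega) (by simpa using hne)
      (by simp) (by simpa [edgeSet] using hg)
  intro n
  induction n with
  | zero => exact fun u p hlt hp => absurd hp.length_le_card (by omega)
  | succ n ih =>
    intro u p hlt hp hne hpS
    rcases hS.exists_isCircuit_or_extend p hp hne hpS with h | ⟨w, q, hq, hqne, hqS, hlen⟩
    · exact h
    · exact ih w q (by omega) hq hqne hqS

lemma EvenDegree.exists_isCycle_signOf_eq_neg_one (hS : G.EvenDegree S)
    (hsgn : G.signOf S = -1) : ∃ C ⊆ S, G.IsCycle C ∧ G.signOf C = -1 := by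
  induction hn : S.ncard using Nat.strong_induction_on generalizing S with
  | _ n ih =>
    obtain rfl | hne := S.eq_empty_or_nonempty
    · simp [signOf] at hsgn
    obtain ⟨w, c, hc, hcS⟩ := hS.exists_isCircuit hne
    rcases Int.units_eq_one_or (G.signOf c.edgeSet) with h1 | h1
    · have hlt : (S \ c.edgeSet).ncard < n := hn ▸ Set.ncard_lt_ncard
        (hcS.sdiff_ssubset_of_nonempty hc.isCycle.1)
      obtain ⟨C, hCS, hC⟩ := ih _ hlt (hS.sdiff hc.isCycle.evenDegree hcS)
        (by rw [← hsgn, ← signOf_sdiff_mul hcS, h1, mul_one]) rfl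
      exact ⟨C, hCS.trans Set.sdiff_subset, hC⟩
    · exact ⟨c.edgeSet, hcS, hc.isCycle, h1⟩

lemma IsCycle.exists_isCircuit (hC : G.IsCycle C) :
    ∃ (w : G.V) (c : Walk G w w), c.IsCircuit ∧ c.edgeSet = C := by
  obtain ⟨w, c, hc, hcC⟩ := hC.evenDegree.exists_isCircuit hC.1
  refine ⟨w, c, hc, hcC.antisymm fun f hf => ?_⟩
  obtain ⟨e₀, he₀⟩ := List.exists_mem_of_ne_nil _ hc.edges_ne_nil
  have hreach := hC.2.2 e₀ (hcC he₀) f hf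
  clear hf
  induction hreach with
  | refl => exact he₀
  | @tail a b _ hab ih =>
    obtain ⟨-, hbC, x, hxa, hxb⟩ := hab
    have hx : G.deg c.edgeSet x = 2 := by
      rw [hc.deg_edgeSet, if_pos (c.mem_support_of_mem_edges ih hxa)]
    have hle : G.deg C x ≤ G.deg c.edgeSet x := by
      rcases hC.2.1 x with h | h <;> omega
    have heq : c.edgeSet ∩ {e | x ∈ G.ends e} = C ∩ {e | x ∈ G.ends e} :=
      Set.eq_of_subset_of_ncard_le (Set.inter_subset_inter_left _ hcC) hle
    have hb : b ∈ C ∩ {e | x ∈ G.ends e} := ⟨hbC, hxb⟩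
    rw [← heq] at hb
    exact hb.1

lemma EvenDegree.symmDiff (hA : G.EvenDegree A) (hB : G.EvenDegree B) :
    G.EvenDegree (A ∆ B) := fun x => by
  have h := deg_symmDiff (A := A) (B := B) x
  have hA := hA x
  have hB := hB x
  rw [Nat.even_iff] at hA hB ⊢
  omega

lemma exists_isCycle_not_mem_signOf_eq_neg_one {e : G.E} (hA : G.IsCycle A) (heA : e ∈ A)
    (hsA : G.signOf A = 1) (hB : G.IsCycle B) (heB : e ∈ B) (hsB : G.signOf B = -1) :
    ∃ C, G.IsCycle C ∧ e ∉ C ∧ G.signOf C = -1 := by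
  obtain ⟨C, hCS, hC, hsC⟩ :=
    (hA.evenDegree.symmDiff hB.evenDegree).exists_isCycle_signOf_eq_neg_one
      (by rw [signOf_symmDiff, hsA, hsB, one_mul])
  refine ⟨C, hC, fun heC => ?_, hsC⟩
  rcases hCS heC with ⟨-, h⟩ | ⟨-, h⟩
  · exact h heB
  · exact h heA

lemma KConnected.exists_path (h : G.KConnected k) {S : Set G.V} (hS : S.ncard < k)
    (hu : u ∉ S) (hv : v ∉ S) :
    ∃ p : Walk G u v, p.support.Nodup ∧ ∀ x ∈ p.support, x ∉ S := by
  suffices ∃ p : Walk G u v, ∀ x ∈ p.support, x ∉ S by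
    obtain ⟨p, hp⟩ := this
    obtain ⟨q, hq, hqp, -⟩ := p.exists_path_subset
    exact ⟨q, hq, fun x hx => hp x (hqp hx)⟩
  induction h.2 S hS u v hu hv with
  | refl => exact ⟨nil u, by simpa using hu⟩
  | @tail w x _ hwx ih =>
    obtain ⟨hw, hx, f, hf⟩ := hwx
    obtain ⟨p, hp⟩ := ih hw
    refine ⟨p.append (cons f hf (nil x)), fun y hy => ?_⟩
    rcases mem_support_append_iff.mp hy with hy | hy
    · exact hp y hy
    · simp only [support_cons, support_nil, List.mem_cons, List.not_mem_nil, or_false] at hy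
      rcases hy with rfl | rfl
      · exact hp y p.end_mem_support
      · exact hx

lemma KConnected.exists_ne_ne (h2 : G.KConnected 2) (u v : G.V) : ∃ w, w ≠ u ∧ w ≠ v := by
  by_contra! h
  have : Finset.univ ⊆ ({u, v} : Finset G.V) := fun w _ => by
    by_cases hw : w = u
    · simp [hw]
    · simp [h w hw]
  have := (Finset.card_le_card this).trans (Finset.card_le_two (a := u) (b := v))
  have := h2.1
  rw [← Finset.card_univ] at this
  omega

lemma KConnected.exists_isCircuit_of_ends (h2 : G.KConnected 2) {f : G.E}
    (hf : G.ends f = s(u, t)) :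
    ∃ (b : G.V) (c : Walk G b b), c.IsCircuit ∧ u ∈ c.support ∧ t ∈ c.support := by
  have hut := ne_of_ends hf
  obtain ⟨z, hzu, hzt⟩ := h2.exists_ne_ne u t
  obtain ⟨p₁, -, hp₁⟩ := h2.exists_path (S := {u}) (by simp) (by simpa using hut.symm)
    (by simpa using hzu)
  obtain ⟨p₂, -, hp₂⟩ := h2.exists_path (S := {t}) (by simp) (by simpa using hzt)
    (by simpa using hut)
  obtain ⟨q, hq, -, hqe⟩ := (p₁.append p₂).exists_path_subset
  have hfq : f ∉ q.edges := fun h => by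
    rcases List.mem_append.mp (by simpa using hqe h) with h | h
    · exact hp₁ u (p₁.mem_support_of_mem_edges h (by simp [hf])) rfl
    · exact hp₂ t (p₂.mem_support_of_mem_edges h (by simp [hf])) rfl
  exact ⟨t, _, isCircuit_append_edge hq hf hfq, by simp, by simp⟩

/-- Whitney's extension step: `t` is joined to the cycle through `u` and `w` by a path avoiding
`w`, and that path, an arc of the cycle through `u`, and the edge `wt` form a new cycle. -/
lemma KConnected.exists_isCircuit_of_isCircuit (h2 : G.KConnected 2) {a : G.V}
    {c : Walk G a a} (hc : c.IsCircuit) (hu : u ∈ c.support) (hw : w ∈ c.support) (huw : u ≠ w)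
    {f : G.E} (hf : G.ends f = s(w, t)) (ht : t ∉ c.support) :
    ∃ (b : G.V) (d : Walk G b b), d.IsCircuit ∧ u ∈ d.support ∧ t ∈ d.support := by
  have hwt := ne_of_ends hf
  obtain ⟨R, hR, hRw⟩ := h2.exists_path (S := {w}) (by simp) (by simpa using hwt.symm)
    (by simpa using huw)
  obtain ⟨z, hz, R₁, R₂, rfl, hR₁c⟩ :=
    R.exists_eq_append_first_mem (M := {x | x ∈ c.support}) R.end_mem_support hu
  have hR₁ := (support_nodup_append_iff.mp hR).1
  have hwR₁ : w ∉ R₁.support := fun h => hRw w (mem_support_append_left _ h) rfl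
  have hzw : z ≠ w := by rintro rfl; exact hwR₁ R₁.end_mem_support
  obtain ⟨A, hA, huA, hAc⟩ : ∃ A : Walk G z w, A.support.Nodup ∧ u ∈ A.support ∧
      ∀ x ∈ A.support, x ∈ c.support := by
    obtain ⟨a₁, a₂, ha₁, ha₂, -, -, hmem⟩ := hc.exists_arcs hz hw hzw
    rcases (hmem u).mp hu with h | h
    · exact ⟨a₁, ha₁, h, fun x hx => (hmem x).mpr (.inl hx)⟩
    · exact ⟨a₂, ha₂, h, fun x hx => (hmem x).mpr (.inr hx)⟩
  have hP : (R₁.append A).support.Nodup :=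
    support_nodup_append_iff.mpr ⟨hR₁, hA, fun x hx hxA => hR₁c x hx (hAc x hxA)⟩
  have hfP : f ∉ (R₁.append A).edges := fun h => by
    rcases List.mem_append.mp (by simpa using h) with h | h
    · exact hwR₁ (R₁.mem_support_of_mem_edges h (by simp [hf]))
    · exact ht (hAc t (A.mem_support_of_mem_edges h (by simp [hf])))
  exact ⟨t, _, isCircuit_append_edge hP hf hfP,
    mem_support_append_left _ (mem_support_append_right _ huA), by simp⟩

/-- Whitney's theorem, by induction along a walk from `t` to `u`. -/
lemma KConnected.exists_isCircuit (h2 : G.KConnected 2) (hut : u ≠ t) :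
    ∃ (b : G.V) (c : Walk G b b), c.IsCircuit ∧ u ∈ c.support ∧ t ∈ c.support := by
  obtain ⟨p, -⟩ := h2.exists_path (S := ∅) (by simp) (Set.notMem_empty t) (Set.notMem_empty u)
  induction p with
  | nil => exact absurd rfl hut
  | @cons t w u f hf q ih =>
    by_cases hwu : w = u
    · subst hwu
      exact h2.exists_isCircuit_of_ends (hf.trans Sym2.eq_swap)
    obtain ⟨b, c, hc, huc, hwc⟩ := ih (Ne.symm hwu)
    by_cases htc : t ∈ c.support
    · exact ⟨b, c, hc, huc, htc⟩
    · exact h2.exists_isCircuit_of_isCircuit hc huc hwc (Ne.symm hwu) (hf.trans Sym2.eq_swap) htc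

structure Fan (G : SGraph) (T : Set G.V) (u : G.V) where
  {x y : G.V}
  p : Walk G u x
  q : Walk G u y
  x_mem : x ∈ T
  y_mem : y ∈ T
  x_ne_y : x ≠ y
  p_nodup : p.support.Nodup
  q_nodup : q.support.Nodup
  p_meet : ∀ w ∈ p.support, w ∈ T → w = x
  q_meet : ∀ w ∈ q.support, w ∈ T → w = y
  common_eq : ∀ w ∈ p.support, w ∈ q.support → w = u

structure Linkage (G : SGraph) (T : Set G.V) (u v : G.V) where
  {x y : G.V}
  p : Walk G u x
  q : Walk G v y
  x_mem : x ∈ T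
  y_mem : y ∈ T
  x_ne_y : x ≠ y
  p_nodup : p.support.Nodup
  q_nodup : q.support.Nodup
  p_meet : ∀ w ∈ p.support, w ∈ T → w = x
  q_meet : ∀ w ∈ q.support, w ∈ T → w = y
  disjoint : ∀ w ∈ p.support, w ∉ q.support

def Fan.symm (F : G.Fan T u) : G.Fan T u :=
  ⟨F.q, F.p, F.y_mem, F.x_mem, F.x_ne_y.symm, F.q_nodup, F.p_nodup, F.q_meet, F.p_meet,
    fun w hq hp => F.common_eq w hp hq⟩

def Linkage.symm (L : G.Linkage T u v) : G.Linkage T v u :=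
  ⟨L.q, L.p, L.y_mem, L.x_mem, L.x_ne_y.symm, L.q_nodup, L.p_nodup, L.q_meet, L.p_meet,
    fun w hq hp => L.disjoint w hp hq⟩

/-- The new fan consists of `F₁` up to `z` followed by `S`, and of `F₂`. -/
lemma nonempty_fan_of_reroute (F₁ F₂ : Walk G u t₁) (S : Walk G z x')
    (hF₁ : F₁.support.Nodup) (hF₂ : F₂.support.Nodup) (hS : S.support.Nodup)
    (hF : ∀ w ∈ F₁.support, w ∈ F₂.support → w = u ∨ w = t₁)
    (hF₁T : ∀ w ∈ F₁.support, w ∈ T → w = t₁) (hF₂T : ∀ w ∈ F₂.support, w ∈ T → w = t₁)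
    (hST : ∀ w ∈ S.support, w ∈ T → w = x')
    (hSF : ∀ w ∈ S.support, w ∈ F₁.support ∨ w ∈ F₂.support → w = z)
    (ht₁ : t₁ ∈ T) (hx' : x' ∈ T) (hx't₁ : x' ≠ t₁) (hz : z ∈ F₁.support) (hzt₁ : z ≠ t₁) :
    Nonempty (G.Fan T u) := by
  obtain ⟨b, r, rfl⟩ := F₁.exists_eq_append hz
  have hb := (support_nodup_append_iff.mp hF₁).1
  have hbF₁ : ∀ w ∈ b.support, w ∈ (b.append r).support := fun w hw => mem_support_append_left _ hw
  have ht₁b : t₁ ∉ b.support :=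
    fun h => hzt₁ (eq_of_mem_support_append hF₁ h r.end_mem_support).symm
  refine ⟨⟨b.append S, F₂, hx', ht₁, hx't₁, ?_, hF₂, ?_, hF₂T, ?_⟩⟩
  · exact support_nodup_append_iff.mpr ⟨hb, hS, fun w hwb hwS => hSF w hwS (.inl (hbF₁ w hwb))⟩
  · intro w hw hwT
    rcases mem_support_append_iff.mp hw with hw | hw
    · exact absurd (hF₁T w (hbF₁ w hw) hwT ▸ hw) ht₁b
    · exact hST w hw hwT
  · intro w hw hwF₂
    rcases mem_support_append_iff.mp hw with hw | hw
    · exact (hF w (hbF₁ w hw) hwF₂).resolve_right fun h => ht₁b (h ▸ hw)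
    · obtain rfl := hSF w hw (.inr hwF₂)
      exact (hF w hz hwF₂).resolve_right hzt₁

/-- A path from `u` to `t₂` avoiding `t₁`, cut at its first vertex `x'` in `T`, leaves `F₁ ∪ F₂`
for the last time at some `z ≠ t₁`; its part after `z` reroutes `F₁` or `F₂`. -/
lemma KConnected.nonempty_fan_of_paths (h2 : G.KConnected 2) (F₁ F₂ : Walk G u t₁)
    (hF₁ : F₁.support.Nodup) (hF₂ : F₂.support.Nodup)
    (hF : ∀ w ∈ F₁.support, w ∈ F₂.support → w = u ∨ w = t₁)
    (hF₁T : ∀ w ∈ F₁.support, w ∈ T → w = t₁) (hF₂T : ∀ w ∈ F₂.support, w ∈ T → w = t₁)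
    (ht₁ : t₁ ∈ T) (ht₂ : t₂ ∈ T) (ht : t₁ ≠ t₂) (hu : u ∉ T) :
    Nonempty (G.Fan T u) := by
  have hut₁ : u ≠ t₁ := fun h => hu (h ▸ ht₁)
  obtain ⟨R, hR, hRt₁⟩ := h2.exists_path (S := {t₁}) (by simp) (by simpa using hut₁)
    (by simpa using ht.symm)
  obtain ⟨x', hx', R₁, R₂, rfl, hR₁T⟩ := R.exists_eq_append_first_mem R.end_mem_support ht₂
  have hR₁ := (support_nodup_append_iff.mp hR).1
  have hR₁t₁ : ∀ w ∈ R₁.support, w ≠ t₁ :=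
    fun w hw => hRt₁ w (mem_support_append_left _ hw)
  obtain ⟨z, hz, S', S₂, hS'R, hS'F⟩ := R₁.reverse.exists_eq_append_first_mem
    (M := {w | w ∈ F₁.support ∨ w ∈ F₂.support}) (by simp) (.inl F₁.start_mem_support)
  have hSR₁ : ∀ w ∈ S'.reverse.support, w ∈ R₁.support := fun w hw => by
    rw [← mem_support_reverse, hS'R]
    exact mem_support_append_left _ (mem_support_reverse.mp hw)
  have hS : S'.reverse.support.Nodup := support_nodup_reverse.mpr
    (support_nodup_append_iff.mp (hS'R ▸ support_nodup_reverse.mpr hR₁)).1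
  have hST : ∀ w ∈ S'.reverse.support, w ∈ T → w = x' := fun w hw => hR₁T w (hSR₁ w hw)
  have hx't₁ : x' ≠ t₁ := hR₁t₁ x' R₁.end_mem_support
  have hzt₁ : z ≠ t₁ := hR₁t₁ z (hSR₁ z S'.reverse.start_mem_support)
  rcases hz with hz | hz
  · exact nonempty_fan_of_reroute F₁ F₂ S'.reverse hF₁ hF₂ hS hF hF₁T hF₂T hST
      (fun w hw => hS'F w (mem_support_reverse.mp hw)) ht₁ hx' hx't₁ hz hzt₁
  · exact nonempty_fan_of_reroute F₂ F₁ S'.reverse hF₂ hF₁ hS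
      (fun w h₂ h₁ => hF w h₁ h₂) hF₂T hF₁T hST
      (fun w hw h => hS'F w (mem_support_reverse.mp hw) h.symm) ht₁ hx' hx't₁ hz hzt₁

/-- The fan lemma: split a cycle through `u` and `t₁` into two arcs and cut them at their first
vertex in `T`. -/
lemma KConnected.nonempty_fan (h2 : G.KConnected 2) (ht₁ : t₁ ∈ T) (ht₂ : t₂ ∈ T)
    (ht : t₁ ≠ t₂) (hu : u ∉ T) : Nonempty (G.Fan T u) := by
  have hut₁ : u ≠ t₁ := fun h => hu (h ▸ ht₁)
  obtain ⟨b, c, hc, huc, ht₁c⟩ := h2.exists_isCircuit hut₁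
  obtain ⟨a₁, a₂, ha₁, ha₂, ha, -, -⟩ := hc.exists_arcs huc ht₁c hut₁
  obtain ⟨x, hx, F₁, r₁, rfl, hF₁T⟩ := a₁.exists_eq_append_first_mem a₁.end_mem_support ht₁
  obtain ⟨y, hy, F₂, r₂, rfl, hF₂T⟩ := a₂.exists_eq_append_first_mem a₂.end_mem_support ht₁
  have hF₁ := (support_nodup_append_iff.mp ha₁).1
  have hF₂ := (support_nodup_append_iff.mp ha₂).1
  have hF : ∀ w ∈ F₁.support, w ∈ F₂.support → w = u ∨ w = t₁ := fun w h₁ h₂ =>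
    ha w (mem_support_append_left _ h₁) (mem_support_append_left _ h₂)
  by_cases hxy : x = y
  · subst hxy
    obtain rfl : x = t₁ := (hF x F₁.end_mem_support F₂.end_mem_support).resolve_left
      fun h => hu (h ▸ hx)
    exact h2.nonempty_fan_of_paths F₁ F₂ hF₁ hF₂ hF hF₁T hF₂T ht₁ ht₂ ht hu
  · refine ⟨⟨F₁, F₂, hx, hy, hxy, hF₁, hF₂, hF₁T, hF₂T, fun w h₁ h₂ => ?_⟩⟩
    refine (hF w h₁ h₂).resolve_right ?_
    rintro rfl
    exact hxy ((hF₁T w h₁ ht₁).symm.trans (hF₂T w h₂ ht₁))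

/-- `Q` followed by the rest of `F.p` serves `v`, and `F.q` serves `u`. -/
lemma Fan.nonempty_linkage_of_reroute (F : G.Fan T u) (Q : Walk G v z) (hQ : Q.support.Nodup)
    (hQF : ∀ w ∈ Q.support, w ∈ T ∨ w ∈ F.p.support ∨ w ∈ F.q.support → w = z)
    (huQ : u ∉ Q.support) (hz : z ∈ F.p.support) : Nonempty (G.Linkage T u v) := by
  obtain ⟨b, r, hbr⟩ := F.p.exists_eq_append hz
  have hp := hbr ▸ F.p_nodup
  have hrp : ∀ w ∈ r.support, w ∈ F.p.support :=
    fun w hw => hbr ▸ mem_support_append_right _ hw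
  have hzq : z ∉ F.q.support := fun h => huQ (F.common_eq z hz h ▸ Q.end_mem_support)
  refine ⟨⟨F.q, Q.append r, F.y_mem, F.x_mem, F.x_ne_y.symm, F.q_nodup, ?_, F.q_meet, ?_, ?_⟩⟩
  · exact support_nodup_append_iff.mpr ⟨hQ, (support_nodup_append_iff.mp hp).2.1,
      fun w hwQ hwr => hQF w hwQ (.inr (.inl (hrp w hwr)))⟩
  · intro w hw hwT
    rcases mem_support_append_iff.mp hw with hw | hw
    · obtain rfl := hQF w hw (.inl hwT)
      exact F.p_meet w hz hwT
    · exact F.p_meet w (hrp w hw) hwT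
  · intro w hwq hw
    rcases mem_support_append_iff.mp hw with hw | hw
    · exact hzq (hQF w hw (.inr (.inr hwq)) ▸ hwq)
    · obtain rfl := F.common_eq w (hrp w hw) hwq
      exact hzq (eq_of_mem_support_append hp b.start_mem_support hw ▸ hwq)

lemma KConnected.nonempty_linkage_of_mem (h2 : G.KConnected 2) (ht₁ : t₁ ∈ T) (ht₂ : t₂ ∈ T)
    (ht : t₁ ≠ t₂) (hu : u ∈ T) (huv : u ≠ v) : Nonempty (G.Linkage T u v) := by
  obtain ⟨t, htT, htu⟩ : ∃ t ∈ T, t ≠ u := by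
    by_cases h : t₁ = u
    · exact ⟨t₂, ht₂, h ▸ ht.symm⟩
    · exact ⟨t₁, ht₁, h⟩
  obtain ⟨Q, hQ, hQu⟩ := h2.exists_path (S := {u}) (by simp) (by simpa using huv.symm)
    (by simpa using htu)
  obtain ⟨y, hy, Q₁, Q₂, rfl, hQ₁T⟩ := Q.exists_eq_append_first_mem Q.end_mem_support htT
  have huQ₁ : u ∉ Q₁.support := fun h => hQu u (mem_support_append_left _ h) rfl
  refine ⟨⟨nil u, Q₁, hu, hy, fun h => huQ₁ (h ▸ Q₁.end_mem_support), by simp,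
    (support_nodup_append_iff.mp hQ).1, by simp, hQ₁T, ?_⟩⟩
  simpa using huQ₁

/-- Take a fan from `u`; a path from `v` avoiding `u` reaches the fan or `T`, and is spliced in
where it first does. -/
lemma KConnected.nonempty_linkage (h2 : G.KConnected 2) (ht₁ : t₁ ∈ T) (ht₂ : t₂ ∈ T)
    (ht : t₁ ≠ t₂) (huv : u ≠ v) : Nonempty (G.Linkage T u v) := by
  by_cases hu : u ∈ T
  · exact h2.nonempty_linkage_of_mem ht₁ ht₂ ht hu huv
  by_cases hv : v ∈ T
  · exact ⟨(h2.nonempty_linkage_of_mem ht₁ ht₂ ht hv huv.symm).some.symm⟩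
  obtain ⟨F⟩ := h2.nonempty_fan ht₁ ht₂ ht hu
  have ht₁u : t₁ ≠ u := fun h => hu (h ▸ ht₁)
  obtain ⟨Q, hQ, hQu⟩ := h2.exists_path (S := {u}) (by simp) (by simpa using huv.symm)
    (by simpa using ht₁u)
  obtain ⟨z, hz, Q₁, Q₂, rfl, hQ₁F⟩ := Q.exists_eq_append_first_mem
    (M := {w | w ∈ T ∨ w ∈ F.p.support ∨ w ∈ F.q.support}) Q.end_mem_support (.inl ht₁)
  have hQ₁ := (support_nodup_append_iff.mp hQ).1
  have huQ₁ : u ∉ Q₁.support := fun h => hQu u (mem_support_append_left _ h) rfl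
  by_cases hzp : z ∈ F.p.support
  · exact F.nonempty_linkage_of_reroute Q₁ hQ₁ hQ₁F huQ₁ hzp
  by_cases hzq : z ∈ F.q.support
  · exact F.symm.nonempty_linkage_of_reroute Q₁ hQ₁
      (fun w hw h => hQ₁F w hw (by simp only [Fan.symm] at h; tauto)) huQ₁ hzq
  have hzT : z ∈ T := hz.resolve_right (by tauto)
  refine ⟨⟨F.p, Q₁, F.x_mem, hzT, fun h => hzp (h ▸ F.p.end_mem_support), F.p_nodup, hQ₁,
    F.p_meet, fun w hw hwT => hQ₁F w hw (.inl hwT), fun w hwp hwQ => ?_⟩⟩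
  exact hzp (hQ₁F w hwQ (.inr (.inl hwp)) ▸ hwp)

lemma Linkage.exists_path_through {c : Walk G a a} (L : G.Linkage {w | w ∈ c.support} u v)
    {e : G.E} (he : G.ends e = s(u, v)) (hec : e ∉ c.edges) :
    ∃ R : Walk G L.x L.y, R.support.Nodup ∧ e ∈ R.edges ∧
      (∀ w ∈ R.support, w ∈ c.support → w = L.x ∨ w = L.y) ∧ R.edges.Disjoint c.edges := by
  have huq : u ∉ L.q.support := L.disjoint u L.p.start_mem_support
  refine ⟨L.p.reverse.append (cons e he L.q), ?_, by simp, fun w hw hwc => ?_, ?_⟩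
  · refine support_nodup_append_iff.mpr ⟨support_nodup_reverse.mpr L.p_nodup,
      List.nodup_cons.mpr ⟨huq, L.q_nodup⟩, fun w hwp hwq => ?_⟩
    rcases List.mem_cons.mp hwq with rfl | hwq
    · rfl
    · exact absurd hwq (L.disjoint w (mem_support_reverse.mp hwp))
  · rcases mem_support_append_iff.mp hw with hw | hw
    · exact .inl (L.p_meet w (mem_support_reverse.mp hw) hwc)
    rcases List.mem_cons.mp hw with rfl | hw
    · exact .inl (L.p_meet w L.p.start_mem_support hwc)
    · exact .inr (L.q_meet w hw hwc)
  · have hp := L.p.edges_disjoint_of_common_eq c (fun w hw hwc => L.p_meet w hw hwc)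
    have hq := L.q.edges_disjoint_of_common_eq c (fun w hw hwc => L.q_meet w hw hwc)
    intro f hfR hfc
    simp only [edges_append, edges_reverse, edges_cons, List.mem_append, List.mem_reverse,
      List.mem_cons] at hfR
    rcases hfR with hf | rfl | hf
    · exact hp hf hfc
    · exact hec hfc
    · exact hq hf hfc

lemma KConnected.exists_isCycle_mem_of_signOf_eq_neg_one (h2 : G.KConnected 2) {e : G.E}
    (hC : G.IsCycle C) (heC : e ∉ C) (hsC : G.signOf C = -1) :
    (∃ D, G.IsCycle D ∧ e ∈ D ∧ G.signOf D = 1) ∧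
    (∃ D, G.IsCycle D ∧ e ∈ D ∧ G.signOf D = -1) := by
  obtain ⟨a, c, hc, rfl⟩ := hC.exists_isCircuit
  obtain ⟨u, v, he, huv⟩ := exists_ends_eq e
  obtain ⟨g, hg⟩ := List.exists_mem_of_ne_nil _ hc.edges_ne_nil
  obtain ⟨t₁, t₂, hg', ht⟩ := exists_ends_eq g
  obtain ⟨L⟩ := h2.nonempty_linkage (T := {w | w ∈ c.support})
    (c.mem_support_of_mem_edges hg (by simp [hg']))
    (c.mem_support_of_mem_edges hg (by simp [hg'])) ht huv
  obtain ⟨R, hR, heR, hRc, hRE⟩ := L.exists_path_through he heC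
  obtain ⟨d₁, d₂, hd₁, hd₂, hRd₁, hRd₂, hsign⟩ :=
    hc.exists_isCircuit_sign_mul R L.x_ne_y L.x_mem L.y_mem hR hRc hRE
  rw [← signOf_edgeSet hc.edges_nodup, hsC, ← signOf_edgeSet hd₁.edges_nodup,
    ← signOf_edgeSet hd₂.edges_nodup] at hsign
  have he₁ : e ∈ d₁.edgeSet := hRd₁ heR
  have he₂ : e ∈ d₂.edgeSet := hRd₂ heR
  rcases Int.units_eq_one_or (G.signOf d₁.edgeSet) with h₁ | h₁
  · rw [h₁, one_mul] at hsign
    exact ⟨⟨_, hd₁.isCycle, he₁, h₁⟩, ⟨_, hd₂.isCycle, he₂, hsign⟩⟩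
  · rw [h₁, neg_one_mul, neg_inj] at hsign
    exact ⟨⟨_, hd₂.isCycle, he₂, hsign⟩, ⟨_, hd₁.isCycle, he₁, h₁⟩⟩

end SGraph

/-- In a 2-connected signed graph, an edge `e` appears in cycles of both signs
iff `G - e` is unbalanced. -/
theorem stmt_0 (G : SGraph) (h2 : G.KConnected 2) (e : G.E) :
    ((∃ C, G.IsCycle C ∧ e ∈ C ∧ G.signOf C = 1) ∧
     (∃ C, G.IsCycle C ∧ e ∈ C ∧ G.signOf C = -1)) ↔
    (∃ C, G.IsCycle C ∧ e ∉ C ∧ G.signOf C = -1) := by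
  constructor
  · rintro ⟨⟨A, hA, heA, hsA⟩, ⟨B, hB, heB, hsB⟩⟩
    exact SGraph.exists_isCycle_not_mem_signOf_eq_neg_one hA heA hsA hB heB hsB
  · rintro ⟨C, hC, heC, hsC⟩
    exact h2.exists_isCycle_mem_of_signOf_eq_neg_one hC heC hsC
end

section
/- Two signatures σ and σ' on the same underlying graph are equivalent (i.e., assign the same sign to every cycle) if and only if the set S of edges on which they differ is an edge-cut of the graph. -/
/-!
Put `τ = σ' σ`: the edges where the signatures differ are those with `τ = -1`, and the two
signatures agree on every cycle iff every cycle is `τ`-positive. If `τ = -1` exactly on `δ(X)`,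
then `τ` is the coboundary `τ(ab) = χ(a) χ(b)` of the vertex signing `χ = -1` on `X`, and a
cycle, meeting each vertex in `0` or `2` edges, is positive. Conversely, if all cycles are
positive then so are all closed walks: split at a repeated vertex, and a closed walk through
distinct vertices is either a cycle or runs back and forth along a single edge. So the sign of a
walk from a root of its component depends only on its endpoint; this potential `χ` has
coboundary `τ`, and `{τ = -1} = δ{χ = -1}`.
-/

theorem List.finprod_mem_setOf_mem {α M : Type*} [DecidableEq α] [CommMonoid M] (f : α → M)
    {l : List α} (hl : l.Nodup) : ∏ᶠ a ∈ {a | a ∈ l}, f a = (l.map f).prod := by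
  rw [show {a | a ∈ l} = ↑l.toFinset by ext; simp, finprod_mem_coe_finset,
    List.prod_toFinset f hl]

theorem List.exists_eq_append_cons_append_cons_of_not_nodup {α : Type*} {l : List α}
    (h : ¬ l.Nodup) : ∃ l₁ a l₂ l₃, l = l₁ ++ a :: (l₂ ++ a :: l₃) := by
  obtain ⟨a, ha⟩ : ∃ a, List.Sublist [a, a] l := by simpa [List.nodup_iff_sublist] using h
  obtain ⟨r₁, r₂, rfl, h₁, h₂⟩ := List.cons_sublist_iff.mp ha
  obtain ⟨l₁, l₂, rfl⟩ := List.append_of_mem h₁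
  obtain ⟨l₃, l₄, rfl⟩ := List.append_of_mem (List.singleton_sublist.mp h₂)
  exact ⟨l₁, a, l₂ ++ l₃, l₄, by simp⟩

theorem List.count_add_count_le_countP {α : Type*} [DecidableEq α] {p : α → Bool} {a b : α}
    (hab : a ≠ b) (ha : p a) (hb : p b) (l : List α) : l.count a + l.count b ≤ l.countP p := by
  induction l with
  | nil => simp
  | cons x l ih =>
    simp only [List.count_cons, List.countP_cons, beq_iff_eq]
    split_ifs <;> simp_all <;> omega

theorem Sym2.exists_mk_eq_mem_not_mem_iff {α : Type*} (a b : α) (X : Set α) :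
    (∃ a' b', s(a, b) = s(a', b') ∧ a' ∈ X ∧ b' ∉ X) ↔ ¬(a ∈ X ↔ b ∈ X) := by
  constructor
  · rintro ⟨a', b', h, ha', hb'⟩
    rcases Sym2.eq_iff.mp h with ⟨rfl, rfl⟩ | ⟨rfl, rfl⟩ <;> tauto
  · intro h
    by_cases ha : a ∈ X
    · exact ⟨a, b, rfl, ha, by tauto⟩
    · exact ⟨b, a, Sym2.eq_swap, by tauto, ha⟩

namespace SGraph

/-- `G.IsWalk u es vs w`: the edges `es` form a walk from `u` to `w`, and `vs` lists the
vertices reached after each step, so that `u :: vs` is the whole vertex sequence. -/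
def IsWalk (G : SGraph) : G.V → List G.E → List G.V → G.V → Prop
  | u, [], [], w => u = w
  | u, e :: es, v :: vs, w => G.ends e = s(u, v) ∧ IsWalk G v es vs w
  | _, _, _, _ => False

variable {G : SGraph}

theorem exists_ends_eq_mk (G : SGraph) (e : G.E) : ∃ a b, G.ends e = s(a, b) :=
  ⟨_, _, (Quot.out_eq (G.ends e)).symm⟩

theorem ne_of_ends_eq_mk {e : G.E} {a b : G.V} (h : G.ends e = s(a, b)) : a ≠ b :=
  fun hab => G.loopless e (by rw [h, hab]; exact Sym2.mk_isDiag_iff.mpr rfl)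

theorem deg_setOf_mem {es : List G.E} (hes : es.Nodup) (v : G.V) :
    G.deg {e | e ∈ es} v = es.countP (fun e => v ∈ G.ends e) := by
  have : {e ∈ {e | e ∈ es} | v ∈ G.ends e} = ↑(es.filter (v ∈ G.ends ·)).toFinset := by
    ext; simp
  rw [deg, this, Set.ncard_coe_finset, List.toFinset_card_of_nodup (hes.filter _),
    List.countP_eq_length_filter]

namespace IsWalk

variable {u w x : G.V} {es : List G.E} {vs : List G.V}

theorem append {es' : List G.E} {vs' : List G.V} (h : G.IsWalk u es vs x)
    (h' : G.IsWalk x es' vs' w) : G.IsWalk u (es ++ es') (vs ++ vs') w := by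
  induction es generalizing u vs with
  | nil =>
    cases vs with
    | nil => cases h; exact h'
    | cons => exact h.elim
  | cons e es ih =>
    cases vs with
    | nil => exact h.elim
    | cons v vs => exact ⟨h.1, ih h.2⟩

theorem exists_reverse (h : G.IsWalk u es vs w) : ∃ vs', G.IsWalk w es.reverse vs' u := by
  induction es generalizing u vs with
  | nil =>
    cases vs with
    | nil => cases h; exact ⟨[], rfl⟩
    | cons => exact h.elim
  | cons e es ih =>
    cases vs with
    | nil => exact h.elim
    | cons v vs =>
      obtain ⟨vs', h'⟩ := ih h.2
      have hstep : G.IsWalk v [e] [u] u := ⟨by rw [h.1, Sym2.eq_swap], rfl⟩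
      exact ⟨vs' ++ [u], by rw [List.reverse_cons]; exact h'.append hstep⟩

theorem exists_split {vs₁ vs₂ : List G.V} (h : G.IsWalk u es (vs₁ ++ x :: vs₂) w) :
    ∃ es₁ es₂, es = es₁ ++ es₂ ∧ es₁ ≠ [] ∧ G.IsWalk u es₁ (vs₁ ++ [x]) x ∧
      G.IsWalk x es₂ vs₂ w := by
  induction vs₁ generalizing u es with
  | nil =>
    cases es with
    | nil => exact h.elim
    | cons e es => exact ⟨[e], es, rfl, by simp, ⟨h.1, rfl⟩, h.2⟩
  | cons v vs₁ ih =>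
    cases es with
    | nil => exact h.elim
    | cons e es =>
      obtain ⟨es₁, es₂, rfl, -, h₁, h₂⟩ := ih h.2
      exact ⟨e :: es₁, es₂, rfl, by simp, ⟨h.1, h₁⟩, h₂⟩

/-- Each step contributes its two distinct ends; all vertices except the two ends of the
walk are counted twice. -/
theorem countP_mem_ends_add (h : G.IsWalk u es vs w) (v : G.V) :
    es.countP (fun e => v ∈ G.ends e) + (if w = v then 1 else 0) =
      (if u = v then 1 else 0) + 2 * vs.count v := by
  induction es generalizing u vs with
  | nil =>
    cases vs with
    | nil => cases h; simp
    | cons => exact h.elim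
  | cons e es ih =>
    cases vs with
    | nil => exact h.elim
    | cons x vs =>
      have hux : u ≠ x := ne_of_ends_eq_mk h.1
      have := ih h.2
      clear ih
      simp only [List.countP_cons, List.count_cons, h.1, Sym2.mem_iff, beq_iff_eq,
        eq_comm (a := v)] at this ⊢
      split_ifs at this ⊢ <;> first | omega | simp_all

theorem countP_mem_ends_of_closed (h : G.IsWalk u es vs u) (v : G.V) :
    es.countP (fun e => v ∈ G.ends e) = 2 * vs.count v := by
  have := h.countP_mem_ends_add v
  omega

theorem reflTransGen_of_mem {C : Set G.E} {e : G.E} (h : G.IsWalk u (e :: es) vs w)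
    (hC : ∀ f ∈ e :: es, f ∈ C) {f : G.E} (hf : f ∈ e :: es) :
    Relation.ReflTransGen
      (fun a b => a ∈ C ∧ b ∈ C ∧ ∃ v, v ∈ G.ends a ∧ v ∈ G.ends b) e f := by
  induction es generalizing u vs e with
  | nil =>
    rw [List.mem_singleton.mp hf]
  | cons e' es ih =>
    cases vs with
    | nil => exact h.elim
    | cons x vs =>
      rcases List.mem_cons.mp hf with rfl | hf
      · exact .refl
      have hx : x ∈ G.ends e' := by
        cases vs with
        | nil => exact h.2.elim
        | cons y vs => rw [h.2.1]; exact Sym2.mem_mk_left x y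
      refine .head ⟨hC e (by simp), hC e' (by simp), x, ?_, hx⟩
        (ih h.2 (fun g hg => hC g ?_) hf)
      · rw [h.1]; exact Sym2.mem_mk_right u x
      · exact List.mem_cons_of_mem e hg

theorem conn_setOf_mem (h : G.IsWalk u es vs w) : G.conn {e | e ∈ es} := by
  intro e he f hf
  cases es with
  | nil => exact (List.not_mem_nil he).elim
  | cons e₀ es =>
    have hC : ∀ g ∈ e₀ :: es, g ∈ {e | e ∈ e₀ :: es} := fun g hg => hg
    exact ((@Relation.ReflTransGen.stdSymm _ _
      ⟨fun _ _ ⟨ha, hb, v, hva, hvb⟩ => ⟨hb, ha, v, hvb, hva⟩⟩).symm _ _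
        (h.reflTransGen_of_mem hC he)).trans (h.reflTransGen_of_mem hC hf)

theorem isCycle_setOf_mem (h : G.IsWalk u es vs u) (hne : es ≠ []) (hes : es.Nodup)
    (hvs : vs.Nodup) : G.IsCycle {e | e ∈ es} := by
  refine ⟨List.exists_mem_of_ne_nil es hne, fun v => ?_, h.conn_setOf_mem⟩
  have := List.nodup_iff_count_le_one.mp hvs v
  rw [deg_setOf_mem hes, h.countP_mem_ends_of_closed]
  omega

/-- A closed walk through distinct vertices that repeats an edge can only run back and forth
along that edge: by `countP_mem_ends_of_closed` each end of the repeated edge meets no other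
edge of the walk, and the walk is connected. -/
theorem exists_forall_eq_of_not_nodup (h : G.IsWalk u es vs u) (hvs : vs.Nodup)
    (hes : ¬ es.Nodup) : ∃ e, Even es.length ∧ ∀ f ∈ es, f = e := by
  obtain ⟨e, he⟩ : ∃ e, 1 < es.count e := by
    simpa [List.nodup_iff_count_le_one] using hes
  have hmem : e ∈ es := List.count_pos_iff.mp (by omega)
  have hinc : ∀ f ∈ es, ∀ x ∈ G.ends e, x ∈ G.ends f → f = e := by
    intro f hf x hxe hxf
    by_contra hfe
    have hle := List.count_add_count_le_countP (p := fun g => x ∈ G.ends g) (Ne.symm hfe)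
      (by simpa using hxe) (by simpa using hxf) es
    have := List.count_pos_iff.mpr hf
    have := List.nodup_iff_count_le_one.mp hvs x
    rw [h.countP_mem_ends_of_closed] at hle
    omega
  have hall : ∀ f ∈ es, f = e := by
    intro f hf
    induction h.conn_setOf_mem e hmem f hf with
    | refl => rfl
    | tail _ hbc ih =>
      obtain ⟨hb, hc, x, hxb, hxc⟩ := hbc
      exact hinc _ hc x (ih hb ▸ hxb) hxc
  obtain ⟨a, b, hab⟩ := G.exists_ends_eq_mk e
  refine ⟨e, ⟨vs.count a, ?_⟩, hall⟩
  rw [← two_mul, ← h.countP_mem_ends_of_closed a, List.countP_eq_length.mpr]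
  intro f hf
  simp [hall f hf, hab]

variable {τ : G.E → ℤˣ} {v : G.V}

theorem prod_eq_one_of_nodup (hτ : ∀ C, G.IsCycle C → ∏ᶠ e ∈ C, τ e = 1)
    (h : G.IsWalk u es vs u) (hvs : vs.Nodup) : (es.map τ).prod = 1 := by
  by_cases hes : es.Nodup
  · rcases eq_or_ne es [] with rfl | hne
    · rfl
    · rw [← List.finprod_mem_setOf_mem τ hes]
      exact hτ _ (h.isCycle_setOf_mem hne hes hvs)
  · obtain ⟨e, heven, hall⟩ := h.exists_forall_eq_of_not_nodup hvs hes
    rw [List.eq_replicate_iff.mpr ⟨rfl, hall⟩, List.map_replicate, List.prod_replicate,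
      Int.units_pow_eq_pow_mod_two, Nat.even_iff.mp heven, pow_zero]

theorem prod_eq_one (hτ : ∀ C, G.IsCycle C → ∏ᶠ e ∈ C, τ e = 1)
    {u : G.V} {es : List G.E} {vs : List G.V} (h : G.IsWalk u es vs u) : (es.map τ).prod = 1 := by
  by_cases hvs : vs.Nodup
  · exact h.prod_eq_one_of_nodup hτ hvs
  obtain ⟨vs₁, x, vs₂, vs₃, rfl⟩ :=
    List.exists_eq_append_cons_append_cons_of_not_nodup hvs
  obtain ⟨es₁, es', rfl, hne₁, h₁, h'⟩ := h.exists_split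
  obtain ⟨es₂, es₃, rfl, hne₂, h₂, h₃⟩ := h'.exists_split
  have hloop := prod_eq_one hτ h₂
  have hrest := prod_eq_one hτ (h₁.append h₃)
  simp only [List.map_append, List.prod_append] at hloop hrest ⊢
  rw [hloop, one_mul, hrest]
termination_by es.length
decreasing_by
  all_goals
    subst_vars
    have := List.length_pos_iff.mpr hne₁
    have := List.length_pos_iff.mpr hne₂
    simp only [List.length_append]
    omega

theorem prod_eq_prod {es' : List G.E} {vs' : List G.V}
    (hτ : ∀ C, G.IsCycle C → ∏ᶠ e ∈ C, τ e = 1) (h : G.IsWalk u es vs v)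
    (h' : G.IsWalk u es' vs' v) : (es.map τ).prod = (es'.map τ).prod := by
  obtain ⟨vs'', hrev⟩ := h'.exists_reverse
  have := (h.append hrev).prod_eq_one hτ
  rwa [List.map_append, List.prod_append, List.map_reverse, List.prod_reverse,
    mul_eq_one_iff_eq_inv, Int.units_inv_eq_self] at this

end IsWalk

def walkSetoid (G : SGraph) : Setoid G.V where
  r u v := ∃ es vs, G.IsWalk u es vs v
  iseqv :=
    { refl := fun _ => ⟨[], [], rfl⟩
      symm := fun ⟨_, _, h⟩ => ⟨_, h.exists_reverse⟩
      trans := fun ⟨_, _, h⟩ ⟨_, _, h'⟩ => ⟨_, _, h.append h'⟩ }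

/-- `τ` is the coboundary of the vertex signing `χ`; for `τ = σ' σ` this says that `σ'` is
obtained from `σ` by switching at the vertices where `χ = -1`. -/
def IsCoboundary (G : SGraph) (τ : G.E → ℤˣ) (χ : G.V → ℤˣ) : Prop :=
  ∀ e a b, G.ends e = s(a, b) → τ e = χ a * χ b

theorem exists_isCoboundary_of_forall_isCycle {τ : G.E → ℤˣ}
    (hτ : ∀ C, G.IsCycle C → ∏ᶠ e ∈ C, τ e = 1) : ∃ χ, G.IsCoboundary τ χ := by
  let root (v : G.V) : G.V := (Quotient.mk G.walkSetoid v).out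
  have hroot (v : G.V) : ∃ es vs, G.IsWalk (root v) es vs v :=
    Quotient.mk_out (s := G.walkSetoid) v
  choose es vs hw using hroot
  -- `χ v` is the sign of a walk from the root of the component of `v` to `v`, which by
  -- `IsWalk.prod_eq_prod` does not depend on the walk.
  refine ⟨fun v => ((es v).map τ).prod, fun e a b hab => ?_⟩
  have hab_root : root a = root b :=
    congrArg Quotient.out (Quotient.sound ⟨[e], [b], hab, rfl⟩)
  have hwalk : G.IsWalk (root b) (es a ++ [e]) (vs a ++ [b]) b :=
    hab_root ▸ (hw a).append (show G.IsWalk a [e] [b] b from ⟨hab, rfl⟩)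
  have := hwalk.prod_eq_prod hτ (hw b)
  rw [List.map_append, List.prod_append, List.map_singleton, List.prod_singleton] at this
  dsimp only
  rw [← this, ← mul_assoc, Int.units_mul_self, one_mul]

theorem finprod_mem_eq_one_of_isCoboundary {τ : G.E → ℤˣ} {χ : G.V → ℤˣ}
    (hχ : G.IsCoboundary τ χ) {C : Set G.E} (hC : ∀ v, Even (G.deg C v)) :
    ∏ᶠ e ∈ C, τ e = 1 := by
  have hτ (e : G.E) : τ e = ∏ v, if v ∈ G.ends e then χ v else 1 := by
    obtain ⟨a, b, hab⟩ := G.exists_ends_eq_mk e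
    have hends : Finset.univ.filter (· ∈ G.ends e) = {a, b} := by
      ext v; simp [hab]
    rw [← Finset.prod_filter, hends, Finset.prod_pair (ne_of_ends_eq_mk hab), hχ e a b hab]
  have hdeg (v : G.V) :
      ((Set.toFinite C).toFinset.filter (v ∈ G.ends ·)).card = G.deg C v := by
    rw [deg, ← Set.ncard_coe_finset]
    congr 1
    ext; simp
  rw [← (Set.toFinite C).coe_toFinset, finprod_mem_coe_finset,
    Finset.prod_congr rfl fun e _ => hτ e, Finset.prod_comm]
  refine Finset.prod_eq_one fun v _ => ?_
  rw [← Finset.prod_filter, Finset.prod_const, hdeg, Int.units_pow_eq_pow_mod_two,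
    Nat.even_iff.mp (hC v), pow_zero]

theorem edgeCut_iff_exists_isCoboundary (τ : G.E → ℤˣ) :
    G.EdgeCut {e | τ e ≠ 1} ↔ ∃ χ, G.IsCoboundary τ χ := by
  constructor
  · classical
    rintro ⟨X, hX⟩
    refine ⟨fun v => if v ∈ X then -1 else 1, fun e a b hab => ?_⟩
    have hcross : τ e ≠ 1 ↔ ¬(a ∈ X ↔ b ∈ X) := by
      rw [← Sym2.exists_mk_eq_mem_not_mem_iff, ← hab]
      exact hX e
    rcases Int.units_eq_one_or (τ e) with h | h <;> by_cases ha : a ∈ X <;>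
      by_cases hb : b ∈ X <;> simp [h, ha, hb] at hcross ⊢
  · rintro ⟨χ, hχ⟩
    refine ⟨{v | χ v = -1}, fun e => ?_⟩
    obtain ⟨a, b, hab⟩ := G.exists_ends_eq_mk e
    rw [hab, Sym2.exists_mk_eq_mem_not_mem_iff]
    change τ e ≠ 1 ↔ ¬(χ a = -1 ↔ χ b = -1)
    rw [hχ e a b hab]
    rcases Int.units_eq_one_or (χ a) with ha | ha <;>
      rcases Int.units_eq_one_or (χ b) with hb | hb <;> simp [ha, hb]

theorem forall_isCycle_finprod_eq_one_iff_edgeCut (τ : G.E → ℤˣ) :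
    (∀ C, G.IsCycle C → ∏ᶠ e ∈ C, τ e = 1) ↔ G.EdgeCut {e | τ e ≠ 1} := by
  rw [edgeCut_iff_exists_isCoboundary]
  refine ⟨exists_isCoboundary_of_forall_isCycle, fun ⟨χ, hχ⟩ C hC =>
    finprod_mem_eq_one_of_isCoboundary hχ fun v => ?_⟩
  rcases hC.2.1 v with h | h <;> simp [h]

end SGraph

/-- Two signatures on the same graph give every cycle the same sign iff the set of
edges on which they differ is an edge-cut. -/
theorem stmt_2 (G : SGraph) (σ' : G.E → ℤˣ) :
    (∀ C, G.IsCycle C → (∏ᶠ e ∈ C, σ' e) = G.signOf C) ↔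
    G.EdgeCut {e | σ' e ≠ G.sgn e} := by
  have hS : {e | σ' e ≠ G.sgn e} = {e | σ' e * G.sgn e ≠ 1} := by
    ext e
    simp [mul_eq_one_iff_eq_inv, Int.units_inv_eq_self]
  rw [hS, ← SGraph.forall_isCycle_finprod_eq_one_iff_edgeCut]
  refine forall_congr' fun C => imp_congr_right fun _ => ?_
  rw [finprod_mem_mul_distrib (Set.toFinite C), mul_eq_one_iff_eq_inv, ← SGraph.signOf,
    Int.units_inv_eq_self]
end

section
/- In the hedgehog signed graph — consisting of a negative triangle C on vertices x₁, x₂, x₃, two additional vertices y₁, y₂, and all six edges between {y₁, y₂} and {x₁, x₂, x₃}, with e₁ = x₁y₁ and e₂ = x₂y₂ — the edges e₁ and e₂ are untied. -/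
namespace SGraph

/-- `G` is a hat: a negative 2-cycle `C` on `x₁, x₂` plus a vertex `y` and
edges `e₁ = x₁y`, `e₂ = x₂y`. -/
def IsHat (G : SGraph) (C : Set G.E) (e₁ e₂ : G.E) : Prop :=
  ∃ (x₁ x₂ y : G.V) (f₁ f₂ : G.E),
    ([x₁, x₂, y] : List G.V).Nodup ∧ (∀ v : G.V, v ∈ [x₁, x₂, y]) ∧
    ([f₁, f₂, e₁, e₂] : List G.E).Nodup ∧ (∀ e : G.E, e ∈ [f₁, f₂, e₁, e₂]) ∧
    G.ends f₁ = s(x₁, x₂) ∧ G.ends f₂ = s(x₁, x₂) ∧ G.sgn f₁ * G.sgn f₂ = -1 ∧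
    G.ends e₁ = s(x₁, y) ∧ G.ends e₂ = s(x₂, y) ∧
    C = {f₁, f₂}

/-- `G` is a target: a negative 4-cycle `C` on `x₁x₂x₃x₄` with chords
`e₁ = x₁x₃` and `e₂ = x₂x₄`. -/
def IsTarget (G : SGraph) (C : Set G.E) (e₁ e₂ : G.E) : Prop :=
  ∃ (x₁ x₂ x₃ x₄ : G.V) (c₁ c₂ c₃ c₄ : G.E),
    ([x₁, x₂, x₃, x₄] : List G.V).Nodup ∧ (∀ v : G.V, v ∈ [x₁, x₂, x₃, x₄]) ∧
    ([c₁, c₂, c₃, c₄, e₁, e₂] : List G.E).Nodup ∧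
    (∀ e : G.E, e ∈ [c₁, c₂, c₃, c₄, e₁, e₂]) ∧
    G.ends c₁ = s(x₁, x₂) ∧ G.ends c₂ = s(x₂, x₃) ∧
    G.ends c₃ = s(x₃, x₄) ∧ G.ends c₄ = s(x₄, x₁) ∧
    G.sgn c₁ * G.sgn c₂ * G.sgn c₃ * G.sgn c₄ = -1 ∧
    G.ends e₁ = s(x₁, x₃) ∧ G.ends e₂ = s(x₂, x₄) ∧
    C = {c₁, c₂, c₃, c₄}

/-- `G` is a hedgehog: a negative triangle `C` on `x₁, x₂, x₃` plus vertices
`y₁, y₂` joined to all the `xⱼ`, with `e₁ = x₁y₁` and `e₂ = x₂y₂`. -/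
def IsHedgehog (G : SGraph) (C : Set G.E) (e₁ e₂ : G.E) : Prop :=
  ∃ (x₁ x₂ x₃ y₁ y₂ : G.V) (c₁ c₂ c₃ a₁₂ a₁₃ a₂₁ a₂₃ : G.E),
    ([x₁, x₂, x₃, y₁, y₂] : List G.V).Nodup ∧ (∀ v : G.V, v ∈ [x₁, x₂, x₃, y₁, y₂]) ∧
    ([c₁, c₂, c₃, e₁, a₁₂, a₁₃, a₂₁, a₂₃, e₂] : List G.E).Nodup ∧
    (∀ e : G.E, e ∈ [c₁, c₂, c₃, e₁, a₁₂, a₁₃, a₂₁, a₂₃, e₂]) ∧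
    G.ends c₁ = s(x₁, x₂) ∧ G.ends c₂ = s(x₂, x₃) ∧ G.ends c₃ = s(x₃, x₁) ∧
    G.sgn c₁ * G.sgn c₂ * G.sgn c₃ = -1 ∧
    G.ends e₁ = s(x₁, y₁) ∧ G.ends a₁₂ = s(x₂, y₁) ∧ G.ends a₁₃ = s(x₃, y₁) ∧
    G.ends a₂₁ = s(x₁, y₂) ∧ G.ends e₂ = s(x₂, y₂) ∧ G.ends a₂₃ = s(x₃, y₂) ∧
    C = {c₁, c₂, c₃}

end SGraph

theorem Int.units_exists_eq_one_and_exists_eq_neg_one_of_prod_eq_neg_one {ι : Type*} [Fintype ι]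
    (hι : Even (Fintype.card ι)) {u : ι → ℤˣ} (h : ∏ i, u i = -1) :
    (∃ i, u i = 1) ∧ ∃ i, u i = -1 := by
  constructor
  · by_contra! hne
    have hall : ∀ i, u i = -1 := fun i => (Int.units_eq_one_or (u i)).resolve_left (hne i)
    simp [hall, hι.neg_one_pow] at h
  · by_contra! hne
    have hall : ∀ i, u i = 1 := fun i => (Int.units_eq_one_or (u i)).resolve_right (hne i)
    simp [hall] at h

namespace SGraph

variable (G : SGraph)

section Polygon

variable {n : ℕ} [NeZero n] {v : Fin n → G.V} {e : Fin n → G.E}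

theorem mem_ends_iff_of_polygon (hv : v.Injective) (hends : ∀ i, G.ends (e i) = s(v i, v (i + 1)))
    (i j : Fin n) : v j ∈ G.ends (e i) ↔ j = i ∨ j = i + 1 := by
  rw [hends, Sym2.mem_iff, hv.eq_iff, hv.eq_iff]

theorem deg_range_of_polygon (hv : v.Injective) (he : e.Injective)
    (hends : ∀ i, G.ends (e i) = s(v i, v (i + 1))) (w : G.V) :
    G.deg (Set.range e) w = 0 ∨ G.deg (Set.range e) w = 2 := by
  by_cases hw : w ∈ Set.range v
  · obtain ⟨j, rfl⟩ := hw
    right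
    have hedges : {f ∈ Set.range e | v j ∈ G.ends f} = {e j, e (j - 1)} := by
      ext f
      simp only [Set.mem_ofPred_eq, Set.mem_range, Set.mem_insert_iff, Set.mem_singleton_iff]
      constructor
      · rintro ⟨⟨i, rfl⟩, hi⟩
        rcases (G.mem_ends_iff_of_polygon hv hends i j).1 hi with rfl | rfl
        · exact .inl rfl
        · exact .inr (by rw [add_sub_cancel_right])
      · rintro (rfl | rfl)
        · exact ⟨⟨j, rfl⟩, (G.mem_ends_iff_of_polygon hv hends _ _).2 (.inl rfl)⟩
        · refine ⟨⟨_, rfl⟩, (G.mem_ends_iff_of_polygon hv hends _ _).2 (.inr ?_)⟩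
          rw [sub_add_cancel]
    -- A polygon with one side would be a loop.
    have hj : j ≠ j - 1 := by
      intro h
      apply G.loopless (e (j - 1))
      rw [hends, sub_add_cancel, ← h, Sym2.mk_isDiag_iff]
    rw [deg, hedges, Set.ncard_pair (he.ne hj)]
  · left
    rw [deg, Set.ncard_eq_zero]
    ext f
    simp only [Set.mem_ofPred_eq, Set.mem_range, Set.mem_empty_iff_false, iff_false, not_and]
    rintro ⟨i, rfl⟩ hi
    rw [hends, Sym2.mem_iff] at hi
    rcases hi with rfl | rfl <;> exact hw ⟨_, rfl⟩

open Fin.NatCast in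
theorem conn_range_of_polygon (hends : ∀ i, G.ends (e i) = s(v i, v (i + 1))) :
    G.conn (Set.range e) := by
  rintro _ ⟨i, rfl⟩ _ ⟨j, rfl⟩
  have hreach : ∀ k : ℕ, Relation.ReflTransGen
      (fun a b => a ∈ Set.range e ∧ b ∈ Set.range e ∧ ∃ w, w ∈ G.ends a ∧ w ∈ G.ends b)
      (e i) (e (i + (k : Fin n))) := by
    intro k
    induction k with
    | zero => simpa using .refl
    | succ k ih =>
      refine ih.tail ⟨⟨_, rfl⟩, ⟨_, rfl⟩, v (i + k + 1), ?_, ?_⟩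
      · simp [hends]
      · simp [hends, add_assoc]
  simpa using hreach (j - i).val

theorem isCycle_range_of_polygon (hv : v.Injective) (he : e.Injective)
    (hends : ∀ i, G.ends (e i) = s(v i, v (i + 1))) : G.IsCycle (Set.range e) :=
  ⟨Set.range_nonempty e, G.deg_range_of_polygon hv he hends, G.conn_range_of_polygon hends⟩

end Polygon

theorem signOf_range {ι : Type*} [Fintype ι] {e : ι → G.E} (he : e.Injective) :
    G.signOf (Set.range e) = ∏ i, G.sgn (e i) := by
  rw [signOf, finprod_mem_range he, finprod_eq_prod_of_fintype]

theorem untied_of_prod_signOf_eq_neg_one {ι : Type*} [Fintype ι] (hι : Even (Fintype.card ι))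
    {e₁ e₂ : G.E} {C : ι → Set G.E} (hC : ∀ i, G.IsCycle (C i) ∧ e₁ ∈ C i ∧ e₂ ∈ C i)
    (hprod : ∏ i, G.signOf (C i) = -1) : G.Untied e₁ e₂ := by
  obtain ⟨⟨i, hi⟩, ⟨j, hj⟩⟩ :=
    Int.units_exists_eq_one_and_exists_eq_neg_one_of_prod_eq_neg_one hι hprod
  exact ⟨⟨C i, (hC i).1, (hC i).2.1, (hC i).2.2, hi⟩, ⟨C j, (hC j).1, (hC j).2.1, (hC j).2.2, hj⟩⟩

end SGraph

/-- In a hedgehog, the distinguished edges `e₁, e₂` are untied. -/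
theorem stmt_5 (G : SGraph) (C : Set G.E) (e₁ e₂ : G.E) (h : G.IsHedgehog C e₁ e₂) :
    G.Untied e₁ e₂ := by
  obtain ⟨x₁, x₂, x₃, y₁, y₂, c₁, c₂, c₃, a₁₂, a₁₃, a₂₁, a₂₃, hx, -, ha, -, hc₁, hc₂, hc₃, hneg,
    he₁, ha₁₂, ha₁₃, ha₂₁, he₂, ha₂₃, -⟩ := h
  set x : Fin 5 → G.V := ![x₁, x₂, x₃, y₁, y₂]
  set a : Fin 9 → G.E := ![c₁, c₂, c₃, e₁, a₁₂, a₁₃, a₂₁, a₂₃, e₂]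
  replace hx : x.Injective := List.nodup_ofFn.mp hx
  replace ha : a.Injective := List.nodup_ofFn.mp ha
  -- Incidences as index pairs, so that each cycle (edges `a ∘ σ` along vertices `x ∘ τ`)
  -- is checked by `decide`.
  set ends₀ : Fin 9 → Sym2 (Fin 5) :=
    ![s(0, 1), s(1, 2), s(2, 0), s(0, 3), s(1, 3), s(2, 3), s(0, 4), s(2, 4), s(1, 4)]
  have hends (k : Fin 9) : G.ends (a k) = (ends₀ k).map x := by
    fin_cases k <;> simp [a, x, ends₀, hc₁, hc₂, hc₃, he₁, ha₁₂, ha₁₃, ha₂₁, he₂, ha₂₃]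
  have hcycle {n : ℕ} [NeZero n] (σ : Fin n → Fin 9) (τ : Fin n → Fin 5) (hσ : σ.Injective)
      (hτ : τ.Injective) (hστ : ∀ i, ends₀ (σ i) = s(τ i, τ (i + 1))) :
      G.IsCycle (Set.range (a ∘ σ)) :=
    G.isCycle_range_of_polygon (hx.comp hτ) (ha.comp hσ) fun i => by simp [hends, hστ]
  refine G.untied_of_prod_signOf_eq_neg_one (C := ![Set.range (a ∘ ![3, 4, 8, 6]),
    Set.range (a ∘ ![3, 5, 1, 8, 6]), Set.range (a ∘ ![3, 4, 8, 7, 2]),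
    Set.range (a ∘ ![3, 5, 7, 8, 0])]) (by decide) (fun i => ?_) ?_
  · fin_cases i
    · exact ⟨hcycle _ ![0, 3, 1, 4] (by decide) (by decide) (by decide), ⟨0, rfl⟩, ⟨2, rfl⟩⟩
    · exact ⟨hcycle _ ![0, 3, 2, 1, 4] (by decide) (by decide) (by decide), ⟨0, rfl⟩, ⟨3, rfl⟩⟩
    · exact ⟨hcycle _ ![0, 3, 1, 4, 2] (by decide) (by decide) (by decide), ⟨0, rfl⟩, ⟨2, rfl⟩⟩
    · exact ⟨hcycle _ ![0, 3, 2, 4, 1] (by decide) (by decide) (by decide), ⟨0, rfl⟩, ⟨3, rfl⟩⟩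
  · simp only [Fin.prod_univ_four, Matrix.cons_val]
    rw [G.signOf_range (ha.comp (by decide)), G.signOf_range (ha.comp (by decide)),
      G.signOf_range (ha.comp (by decide)), G.signOf_range (ha.comp (by decide))]
    simp only [Fin.prod_univ_four, Fin.prod_univ_five, Function.comp_apply, Matrix.cons_val, a]
    rw [← hneg]
    have hcancel (u v : ℤˣ) : u * (u * v) = v := by rw [← mul_assoc, Int.units_mul_self, one_mul]
    simp only [mul_comm, mul_left_comm, mul_assoc, Int.units_mul_self, hcancel, mul_one]
end
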